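/- arXiv:2105.09964 — 3 statements merged into one kernel-verified Lean document; each statement's English description precedes it below -/
import Mathlib

section
/- For every set partition π of [n], the identity h_π = Σ_{σ ⊢ [n]} λ(σ∧π)! · m_σ holds in F = FreeAlgebra ℚ (Fin N), where the sum is over all set partitions σ of [n], σ∧π denotes the common refinement of σ and π (the set partition whose blocks are the nonempty intersections of a block of σ with a block of π), and λ(σ∧π)! is the product of the factorials of the block sizes of σ∧π. -/
open scoped BigOperators Classical

noncomputable section

namespace NCSymPaper

/-- `π` is a set partition of `{0, …, n-1}` (representing `[n] = {1, …, n}`):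
its blocks are nonempty and every element lies in exactly one block. -/
def IsSetPartition {n : ℕ} (π : Finset (Finset (Fin n))) : Prop :=
  (∀ B ∈ π, B.Nonempty) ∧ ∀ j : Fin n, ∃! B, B ∈ π ∧ j ∈ B

/-- `j` and `k` lie in a common block of `π`. -/
def sameBlock {n : ℕ} (π : Finset (Finset (Fin n))) (j k : Fin n) : Prop :=
  ∃ B ∈ π, j ∈ B ∧ k ∈ B

/-- The noncommutative monomial `x_{f 1} x_{f 2} ⋯ x_{f n}` in `FreeAlgebra ℚ (Fin N)`. -/
def ncMonomial {N n : ℕ} (f : Fin n → Fin N) : FreeAlgebra ℚ (Fin N) :=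
  (List.ofFn fun j => FreeAlgebra.ι ℚ (f j)).prod

/-- `η` maps every block of `π` to itself. -/
def fixesBlocks {n : ℕ} (π : Finset (Finset (Fin n))) (η : Equiv.Perm (Fin n)) : Prop :=
  ∀ B ∈ π, ∀ j ∈ B, η j ∈ B

/-- The complete homogeneous symmetric function in noncommuting variables `h_π`. -/
def hNC (N : ℕ) {n : ℕ} (π : Finset (Finset (Fin n))) : FreeAlgebra ℚ (Fin N) :=
  ∑ η ∈ Finset.univ.filter (fixesBlocks π),
    ∑ f ∈ Finset.univ.filter (fun f : Fin n → Fin N =>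
        ∀ j k : Fin n, j < k → sameBlock π j k → f j ≤ f k),
      ncMonomial fun j => f (η j)

/-- The monomial symmetric function in noncommuting variables `m_σ`. -/
def mNC (N : ℕ) {n : ℕ} (σ : Finset (Finset (Fin n))) : FreeAlgebra ℚ (Fin N) :=
  ∑ f ∈ Finset.univ.filter (fun f : Fin n → Fin N =>
      ∀ j k : Fin n, f j = f k ↔ sameBlock σ j k),
    ncMonomial f

/-- The elementary symmetric function in noncommuting variables `e_π`. -/
def eNC (N : ℕ) {n : ℕ} (π : Finset (Finset (Fin n))) : FreeAlgebra ℚ (Fin N) :=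
  ∑ f ∈ Finset.univ.filter (fun f : Fin n → Fin N =>
      ∀ j k : Fin n, j ≠ k → sameBlock π j k → f j ≠ f k),
    ncMonomial f

/-- `lam` is an integer partition (weakly decreasing list of positive integers). -/
def IsPartitionList (lam : List ℕ) : Prop :=
  List.Pairwise (· ≥ ·) lam ∧ ∀ x ∈ lam, 0 < x

/-- The entry `β(ε)_i = λ_i − μ_{ε(i)} + ε(i) − i` (0-indexed; `μ_j = 0` beyond `ℓ(μ)`). -/
def betaInt (lam mu : List ℕ) (ε : Equiv.Perm (Fin lam.length)) (i : Fin lam.length) : ℤ :=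
  (lam.get i : ℤ) - (mu.getD (ε i : ℕ) 0 : ℤ) + ((ε i : ℕ) : ℤ) - ((i : ℕ) : ℤ)

/-- The set partition of `[n]` into consecutive intervals of sizes `b 0, b 1, …`
(sizes equal to `0` contribute no block). -/
def intervalBlocks (n : ℕ) {l : ℕ} (b : Fin l → ℕ) : Finset (Finset (Fin n)) :=
  ((Finset.univ : Finset (Fin l)).image fun i =>
      (Finset.univ : Finset (Fin n)).filter fun k : Fin n =>
        (∑ j ∈ Finset.univ.filter fun j => j < i, b j) ≤ (k : ℕ) ∧
          (k : ℕ) < (∑ j ∈ Finset.univ.filter fun j => j < i, b j) + b i).filter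
    fun B => B.Nonempty

/-- The image of a set partition under a map `δ` (blockwise image). -/
def applyMap {n : ℕ} (δ : Fin n → Fin n) (π : Finset (Finset (Fin n))) :
    Finset (Finset (Fin n)) :=
  π.image fun B => B.image δ

/-- The skew Schur function in noncommuting variables
`s_{(δ, λ/μ)} = Σ_ε sgn(ε) (1/β(ε)!) h_{δ[β(ε)]}`, the summand being `0`
whenever some entry of `β(ε)` is negative. -/
def sNC (N n : ℕ) (δ : Fin n → Fin n) (lam mu : List ℕ) : FreeAlgebra ℚ (Fin N) :=
  ∑ ε : Equiv.Perm (Fin lam.length),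
    if ∀ i, 0 ≤ betaInt lam mu ε i then
      (((Equiv.Perm.sign ε : ℤ) : ℚ) *
          ∏ i, 1 / ((betaInt lam mu ε i).toNat.factorial : ℚ)) •
        hNC N (applyMap δ (intervalBlocks n fun i => (betaInt lam mu ε i).toNat))
    else 0

/-- Analogue of `sNC` with `e`'s in place of `h`'s (used for transposed Schur functions). -/
def sNCe (N n : ℕ) (δ : Fin n → Fin n) (lam mu : List ℕ) : FreeAlgebra ℚ (Fin N) :=
  ∑ ε : Equiv.Perm (Fin lam.length),
    if ∀ i, 0 ≤ betaInt lam mu ε i then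
      (((Equiv.Perm.sign ε : ℤ) : ℚ) *
          ∏ i, 1 / ((betaInt lam mu ε i).toNat.factorial : ℚ)) •
        eNC N (applyMap δ (intervalBlocks n fun i => (betaInt lam mu ε i).toNat))
    else 0

/-- The projection `ρ` letting the variables commute. -/
def rho (N : ℕ) : FreeAlgebra ℚ (Fin N) →ₐ[ℚ] MvPolynomial (Fin N) ℚ :=
  FreeAlgebra.lift ℚ MvPolynomial.X

/-- The complete homogeneous symmetric polynomial of degree `k` in `N` commuting
variables (`1` for `k = 0`, `0` for `k < 0`). -/
def hPoly (N : ℕ) (k : ℤ) : MvPolynomial (Fin N) ℚ :=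
  if 0 ≤ k then
    ∑ f ∈ Finset.univ.filter fun f : Fin k.toNat → Fin N => Monotone f,
      ∏ j, MvPolynomial.X (f j)
  else 0

/-- The skew Schur polynomial `s_{λ/μ} = det(h_{λ_i − μ_j − i + j})`. -/
def schurPoly (N : ℕ) (lam mu : List ℕ) : MvPolynomial (Fin N) ℚ :=
  Matrix.det (Matrix.of fun i j : Fin lam.length =>
    hPoly N ((lam.get i : ℤ) - (mu.getD (j : ℕ) 0 : ℤ) - ((i : ℕ) : ℤ) + ((j : ℕ) : ℤ)))

/-- Order on blocks: weakly decreasing size, ties broken by increasing least element. -/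
def blockLe {n : ℕ} (B C : Finset (Fin n)) : Bool :=
  decide (C.card < B.card ∨ (B.card = C.card ∧ B.min ≤ C.min))

/-- The blocks of `π`, listed in weakly decreasing size with ties broken by
increasing least element. -/
def sortedBlocks {n : ℕ} (π : Finset (Finset (Fin n))) : List (Finset (Fin n)) :=
  π.toList.mergeSort blockLe

/-- The one-line notation of `δ_π`. -/
def oneLine {n : ℕ} (π : Finset (Finset (Fin n))) : List (Fin n) :=
  ((sortedBlocks π).map fun B => B.sort (· ≤ ·)).flatten

/-- The permutation `δ_π` (as a function). -/
def deltaPi {n : ℕ} (π : Finset (Finset (Fin n))) : Fin n → Fin n :=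
  fun i => (oneLine π).getD (i : ℕ) i

/-- `λ(π)`: the weakly decreasing list of block sizes of `π`. -/
def lamOf {n : ℕ} (π : Finset (Finset (Fin n))) : List ℕ :=
  (sortedBlocks π).map Finset.card

/-- The standard Schur function in noncommuting variables `s_π = s_{(δ_π, λ(π))}`. -/
def sPi (N : ℕ) {n : ℕ} (π : Finset (Finset (Fin n))) : FreeAlgebra ℚ (Fin N) :=
  sNC N n (deltaPi π) (lamOf π) []

/-- The transposed standard Schur function in noncommuting variables `s^t_π`. -/
def sPiT (N : ℕ) {n : ℕ} (π : Finset (Finset (Fin n))) : FreeAlgebra ℚ (Fin N) :=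
  sNCe N n (deltaPi π) (lamOf π) []

/-- The transpose of an integer partition: `(λ^t)_i = #{j : λ_j ≥ i}`. -/
def transposeList (lam : List ℕ) : List ℕ :=
  (List.range (lam.foldr max 0)).map fun i => (lam.filter fun x => i + 1 ≤ x).length

/-- The weakly decreasing list of parts of a `Nat.Partition`. -/
def nuList {n : ℕ} (ν : Nat.Partition n) : List ℕ :=
  (Multiset.sort ν.parts (· ≤ ·)).reverse

/-- The cells of the skew diagram `λ/μ` in reading order (0-indexed pairs (row, column)). -/
def cellL (lam mu : List ℕ) : List (ℕ × ℕ) :=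
  (List.range lam.length).flatMap fun i =>
    ((List.range (lam.getD i 0)).drop (mu.getD i 0)).map fun j => (i, j)

/-- The `a`-th cell of `λ/μ` in reading order. -/
def cellOf (lam mu : List ℕ) (a : ℕ) : ℕ × ℕ :=
  (cellL lam mu).getD a (0, 0)

/-- `T` (a filling of the cells of `λ/μ`, listed in reading order) is a semistandard
Young tableau: rows weakly increase left to right, columns strictly increase
top to bottom. -/
def IsSSYT {N n : ℕ} (lam mu : List ℕ) (T : Fin n → Fin N) : Prop :=
  ∀ a b : Fin n,
    ((cellOf lam mu a).1 = (cellOf lam mu b).1 ∧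
        (cellOf lam mu b).2 = (cellOf lam mu a).2 + 1 → T a ≤ T b) ∧
    ((cellOf lam mu b).1 = (cellOf lam mu a).1 + 1 ∧
        (cellOf lam mu b).2 = (cellOf lam mu a).2 → T a < T b)

/-- The Rosas–Sagan skew Schur function `S_{λ/μ}`. -/
def RSschur (N n : ℕ) (lam mu : List ℕ) : FreeAlgebra ℚ (Fin N) :=
  ∑ δ : Equiv.Perm (Fin n),
    ∑ T ∈ Finset.univ.filter fun T : Fin n → Fin N => IsSSYT lam mu T,
      ncMonomial fun k => T (δ k)

/-- The Kostka number `K_ν^{λ/μ}`: the number of semistandard Young tableaux of shape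
`λ/μ` in which the entry `i` occurs exactly `ν_i` times (all entries of such a
tableau necessarily lie in `{1, …, n}` where `n = |λ/μ|`). -/
def kostka (n : ℕ) (lam mu nu : List ℕ) : ℕ :=
  (Finset.univ.filter fun T : Fin n → Fin n =>
      IsSSYT lam mu T ∧
        ∀ i : Fin n, (Finset.univ.filter fun a : Fin n => T a = i).card = nu.getD (i : ℕ) 0).card

section Aux

variable {n N : ℕ} {π : Finset (Finset (Fin n))}

/-- The block of `π` containing `j`. -/
def blockOf (π : Finset (Finset (Fin n))) (hπ : IsSetPartition π) (j : Fin n) :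
    Finset (Fin n) :=
  Finset.choose (fun B => j ∈ B) π (hπ.2 j)

lemma blockOf_mem (hπ : IsSetPartition π) (j : Fin n) : blockOf π hπ j ∈ π :=
  Finset.choose_mem _ _ _

lemma mem_blockOf (hπ : IsSetPartition π) (j : Fin n) : j ∈ blockOf π hπ j :=
  Finset.choose_property (fun B => j ∈ B) π (hπ.2 j)

lemma blockOf_eq (hπ : IsSetPartition π) {j : Fin n} {B : Finset (Fin n)}
    (hB : B ∈ π) (hj : j ∈ B) : blockOf π hπ j = B :=
  (hπ.2 j).unique ⟨blockOf_mem hπ j, mem_blockOf hπ j⟩ ⟨hB, hj⟩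

lemma fixesBlocks_iff (hπ : IsSetPartition π) {η : Equiv.Perm (Fin n)} :
    fixesBlocks π η ↔ ∀ j, blockOf π hπ (η j) = blockOf π hπ j := by
  constructor
  · intro h j
    exact blockOf_eq hπ (blockOf_mem hπ j) (h _ (blockOf_mem hπ j) j (mem_blockOf hπ j))
  · intro h B hB j hj
    have hb : blockOf π hπ j = B := blockOf_eq hπ hB hj
    rw [← hb, ← h j]
    exact mem_blockOf hπ (η j)

lemma image_of_fixes {η : Equiv.Perm (Fin n)} (hη : fixesBlocks π η)
    {B : Finset (Fin n)} (hB : B ∈ π) : B.image η = B := by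
  apply Finset.eq_of_subset_of_card_le
  · intro x hx
    obtain ⟨j, hj, rfl⟩ := Finset.mem_image.mp hx
    exact hη B hB j hj
  · rw [Finset.card_image_of_injective _ η.injective]

lemma fixesBlocks_inv {η : Equiv.Perm (Fin n)} (hη : fixesBlocks π η) :
    fixesBlocks π η⁻¹ := by
  intro B hB j hj
  rw [← image_of_fixes hη hB] at hj
  obtain ⟨k, hk, rfl⟩ := Finset.mem_image.mp hj
  simpa using hk

/-- The kernel set partition of a function. -/
def kerPart (g : Fin n → Fin N) : Finset (Finset (Fin n)) :=
  (Finset.univ.image fun v : Fin N => Finset.univ.filter fun j => g j = v).filter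
    Finset.Nonempty

lemma fiber_mem_kerPart (g : Fin n → Fin N) (j : Fin n) :
    (Finset.univ.filter fun k => g k = g j) ∈ kerPart g := by
  refine Finset.mem_filter.mpr ⟨Finset.mem_image_of_mem _ (Finset.mem_univ _), ⟨j, ?_⟩⟩
  simp

lemma kerPart_isPartition (g : Fin n → Fin N) : IsSetPartition (kerPart g) := by
  constructor
  · intro B hB; exact (Finset.mem_filter.mp hB).2
  · intro j
    refine ⟨Finset.univ.filter fun k => g k = g j, ⟨fiber_mem_kerPart g j, by simp⟩, ?_⟩
    rintro C ⟨hC, hjC⟩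
    obtain ⟨hC', -⟩ := Finset.mem_filter.mp hC
    obtain ⟨v, -, rfl⟩ := Finset.mem_image.mp hC'
    have hv : g j = v := (Finset.mem_filter.mp hjC).2
    rw [hv]

lemma kerPart_pred (g : Fin n → Fin N) (j k : Fin n) :
    g j = g k ↔ sameBlock (kerPart g) j k := by
  constructor
  · intro h
    exact ⟨_, fiber_mem_kerPart g j, by simp,
      Finset.mem_filter.mpr ⟨Finset.mem_univ _, h.symm⟩⟩
  · rintro ⟨C, hC, hj, hk⟩
    obtain ⟨hC', -⟩ := Finset.mem_filter.mp hC
    obtain ⟨v, -, rfl⟩ := Finset.mem_image.mp hC'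
    have h1 := (Finset.mem_filter.mp hj).2
    have h2 := (Finset.mem_filter.mp hk).2
    rw [h1, h2]

lemma eq_kerPart {σ : Finset (Finset (Fin n))} (hσ : IsSetPartition σ) {g : Fin n → Fin N}
    (h : ∀ j k : Fin n, g j = g k ↔ sameBlock σ j k) : σ = kerPart g := by
  apply Finset.Subset.antisymm
  · intro C hC
    obtain ⟨j, hj⟩ := hσ.1 C hC
    have hCeq : C = Finset.univ.filter fun k => g k = g j := by
      ext k
      simp only [Finset.mem_filter, Finset.mem_univ, true_and]
      constructor
      · intro hk; exact ((h j k).mpr ⟨C, hC, hj, hk⟩).symm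
      · intro hk
        obtain ⟨B, hB, hjB, hkB⟩ := (h j k).mp hk.symm
        rwa [(hσ.2 j).unique ⟨hC, hj⟩ ⟨hB, hjB⟩]
    rw [hCeq]; exact fiber_mem_kerPart g j
  · intro C hC
    obtain ⟨hC', j, hj⟩ := Finset.mem_filter.mp hC
    obtain ⟨v, -, rfl⟩ := Finset.mem_image.mp hC'
    have hgj : g j = v := (Finset.mem_filter.mp hj).2
    obtain ⟨B, ⟨hB, hjB⟩, -⟩ := hσ.2 j
    have hBeq : (Finset.univ.filter fun k => g k = v) = B := by
      ext k
      simp only [Finset.mem_filter, Finset.mem_univ, true_and]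
      constructor
      · intro hk
        obtain ⟨B', hB', hjB', hkB'⟩ := (h j k).mp (by rw [hgj, hk])
        rwa [(hσ.2 j).unique ⟨hB, hjB⟩ ⟨hB', hjB'⟩]
      · intro hk
        have hh := (h j k).mpr ⟨B, hB, hjB, hk⟩
        rw [← hh]; exact hgj
    rw [hBeq]; exact hB

/-- Monotonicity along the blocks of `π`. -/
def monoP (π : Finset (Finset (Fin n))) (g : Fin n → Fin N) : Prop :=
  ∀ j k : Fin n, j < k → sameBlock π j k → g j ≤ g k

/-- Within a block `B`, the index realizing the weakly increasing rearrangement of `g`. -/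
def sortedIdx (B : Finset (Fin n)) (g : Fin n → Fin N) (j : Fin n) : Fin n :=
  if hj : j ∈ B then
    ((B.orderIsoOfFin rfl)
      ((Tuple.sort fun a => g ((B.orderIsoOfFin rfl) a).1)
        ((B.orderIsoOfFin rfl).symm ⟨j, hj⟩))).1
  else j

lemma sortedIdx_mem {B : Finset (Fin n)} (g : Fin n → Fin N) {j : Fin n} (hj : j ∈ B) :
    sortedIdx B g j ∈ B := by
  rw [sortedIdx, dif_pos hj]
  exact ((B.orderIsoOfFin rfl) _).2

lemma sortedIdx_injOn {B : Finset (Fin n)} (g : Fin n → Fin N) {j k : Fin n}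
    (hj : j ∈ B) (hk : k ∈ B) (h : sortedIdx B g j = sortedIdx B g k) : j = k := by
  rw [sortedIdx, dif_pos hj, sortedIdx, dif_pos hk] at h
  have h2 := (B.orderIsoOfFin rfl).injective (Subtype.ext h)
  have h3 := (Tuple.sort _).injective h2
  have h4 := (B.orderIsoOfFin rfl).symm.injective h3
  exact congrArg Subtype.val h4

lemma sortedIdx_mono {B : Finset (Fin n)} (g : Fin n → Fin N) {j k : Fin n}
    (hj : j ∈ B) (hk : k ∈ B) (hjk : j ≤ k) :
    g (sortedIdx B g j) ≤ g (sortedIdx B g k) := by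
  rw [sortedIdx, dif_pos hj, sortedIdx, dif_pos hk]
  have hm := Tuple.monotone_sort fun a => g ((B.orderIsoOfFin rfl) a).1
  have hab : (B.orderIsoOfFin rfl).symm ⟨j, hj⟩ ≤ (B.orderIsoOfFin rfl).symm ⟨k, hk⟩ :=
    (B.orderIsoOfFin rfl).symm.monotone (Subtype.mk_le_mk.mpr hjk)
  exact hm hab

lemma exists_mono (hπ : IsSetPartition π) (g : Fin n → Fin N) :
    ∃ η : Equiv.Perm (Fin n), fixesBlocks π η ∧ monoP π (g ∘ η) := by
  classical
  set F : Fin n → Fin n := fun j => sortedIdx (blockOf π hπ j) g j with hF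
  have hFmem : ∀ j, F j ∈ blockOf π hπ j := fun j => sortedIdx_mem g (mem_blockOf hπ j)
  have hinj : Function.Injective F := by
    intro j k h
    have hBeq : blockOf π hπ j = blockOf π hπ k :=
      (hπ.2 (F j)).unique ⟨blockOf_mem hπ j, hFmem j⟩
        ⟨blockOf_mem hπ k, by rw [h]; exact hFmem k⟩
    have hkmem : k ∈ blockOf π hπ j := by rw [hBeq]; exact mem_blockOf hπ k
    have h' : sortedIdx (blockOf π hπ j) g j = sortedIdx (blockOf π hπ k) g k := h
    rw [← hBeq] at h'
    exact sortedIdx_injOn g (mem_blockOf hπ j) hkmem h'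
  refine ⟨Equiv.ofBijective F (Finite.injective_iff_bijective.mp hinj), ?_, ?_⟩
  · intro B hB j hj
    have hm := hFmem j
    rw [blockOf_eq hπ hB hj] at hm
    exact hm
  · intro j k hjk hsb
    obtain ⟨B, hB, hjB, hkB⟩ := hsb
    have h1 : blockOf π hπ j = B := blockOf_eq hπ hB hjB
    have h2 : blockOf π hπ k = B := blockOf_eq hπ hB hkB
    show g (F j) ≤ g (F k)
    rw [hF]
    simp only
    rw [h1, h2]
    exact sortedIdx_mono g hjB hkB hjk.le

lemma unique_mono (hπ : IsSetPartition π) {g : Fin n → Fin N} {η η' : Equiv.Perm (Fin n)}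
    (hη : fixesBlocks π η) (hm : monoP π (g ∘ η))
    (hη' : fixesBlocks π η') (hm' : monoP π (g ∘ η')) : g ∘ η = g ∘ η' := by
  classical
  funext j
  set B := blockOf π hπ j with hB
  have hBπ : B ∈ π := blockOf_mem hπ j
  set e := B.orderIsoOfFin rfl with he
  have hrestr : ∀ (τ : Equiv.Perm (Fin n)), fixesBlocks π τ →
      ∀ x : Fin n, x ∈ B ↔ τ x ∈ B := by
    intro τ hτ x
    constructor
    · exact fun hx => hτ B hBπ x hx
    · intro hx
      have h := fixesBlocks_inv hτ B hBπ _ hx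
      simpa using h
  set u : Equiv.Perm (Fin B.card) :=
    (e.toEquiv.symm.permCongr (η.subtypePerm (fun x => (hrestr η hη x).symm))) with hu
  set u' : Equiv.Perm (Fin B.card) :=
    (e.toEquiv.symm.permCongr (η'.subtypePerm (fun x => (hrestr η' hη' x).symm))) with hu'
  set f : Fin B.card → Fin N := fun a => g ((e a).1) with hf
  have happ : ∀ a, (f ∘ u) a = g (η ((e a).1)) := by
    intro a
    simp [hu, hf, Equiv.permCongr_apply, Equiv.Perm.subtypePerm_apply]
  have happ' : ∀ a, (f ∘ u') a = g (η' ((e a).1)) := by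
    intro a
    simp [hu', hf, Equiv.permCongr_apply, Equiv.Perm.subtypePerm_apply]
  have hmono : ∀ (τ : Equiv.Perm (Fin n)), fixesBlocks π τ → monoP π (g ∘ τ) →
      ∀ (w : Equiv.Perm (Fin B.card)), (∀ a, (f ∘ w) a = g (τ ((e a).1))) →
      Monotone (f ∘ w) := by
    intro τ hτ hmτ w hw a b hab
    rcases eq_or_lt_of_le hab with rfl | hlt
    · exact le_rfl
    · rw [hw a, hw b]
      have hee : (e a).1 < (e b).1 := by
        have := e.strictMono hlt
        exact Subtype.coe_lt_coe.mpr this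
      exact hmτ _ _ hee ⟨B, hBπ, (e a).2, (e b).2⟩
  have hueq : f ∘ u = f ∘ u' :=
    Tuple.unique_monotone (hmono η hη hm u happ) (hmono η' hη' hm' u' happ')
  have hjB : j ∈ B := mem_blockOf hπ j
  set a := e.symm ⟨j, hjB⟩ with ha
  have hea : ((e a).1 : Fin n) = j := by rw [ha]; simp
  show g (η j) = g (η' j)
  calc g (η j) = (f ∘ u) a := by rw [happ a, hea]
    _ = (f ∘ u') a := by rw [hueq]
    _ = g (η' j) := by rw [happ' a, hea]

lemma count_sorting (hπ : IsSetPartition π) (g : Fin n → Fin N) :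
    (Finset.univ.filter fun η : Equiv.Perm (Fin n) =>
        fixesBlocks π η ∧ monoP π (g ∘ η)).card =
      ∏ B ∈ π, ∏ v : Fin N, (B.filter fun j => g j = v).card.factorial := by
  classical
  obtain ⟨η₀, hη₀f, hη₀m⟩ := exists_mono hπ g
  set G : Fin n → Finset (Fin n) × Fin N := fun j => (blockOf π hπ j, g (η₀ j)) with hG
  have step1 : (Finset.univ.filter fun τ : Equiv.Perm (Fin n) => G ∘ τ = G).card
      = (Finset.univ.filter fun η : Equiv.Perm (Fin n) =>
          fixesBlocks π η ∧ monoP π (g ∘ η)).card := by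
    apply Finset.card_bij (fun τ _ => η₀ * τ)
    · intro τ hτ
      rw [Finset.mem_filter] at hτ
      obtain ⟨-, hτ2⟩ := hτ
      have h1 : ∀ j, blockOf π hπ (τ j) = blockOf π hπ j :=
        fun j => congrArg Prod.fst (congrFun hτ2 j)
      have h2 : ∀ j, g (η₀ (τ j)) = g (η₀ j) :=
        fun j => congrArg Prod.snd (congrFun hτ2 j)
      have hτf : fixesBlocks π τ := (fixesBlocks_iff hπ).mpr h1
      refine Finset.mem_filter.mpr ⟨Finset.mem_univ _, ?_, ?_⟩
      · intro B hB j hj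
        exact hη₀f B hB _ (hτf B hB j hj)
      · have hcomp : g ∘ (η₀ * τ) = g ∘ η₀ := funext fun j => h2 j
        rw [hcomp]
        exact hη₀m
    · intro τ₁ h₁ τ₂ h₂ h
      exact mul_left_cancel h
    · intro η hη
      rw [Finset.mem_filter] at hη
      obtain ⟨-, hηf, hηm⟩ := hη
      refine ⟨η₀⁻¹ * η, Finset.mem_filter.mpr ⟨Finset.mem_univ _, ?_⟩,
        mul_inv_cancel_left η₀ η⟩
      funext j
      have hgeq : g (η j) = g (η₀ j) := congrFun (unique_mono hπ hηf hηm hη₀f hη₀m) j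
      have hbl : blockOf π hπ ((η₀⁻¹ * η) j) = blockOf π hπ j := by
        have e1 := (fixesBlocks_iff hπ).mp (fixesBlocks_inv hη₀f) (η j)
        have e2 := (fixesBlocks_iff hπ).mp hηf j
        calc blockOf π hπ ((η₀⁻¹ * η) j) = blockOf π hπ (η₀⁻¹ (η j)) := rfl
          _ = blockOf π hπ (η j) := e1
          _ = blockOf π hπ j := e2
      have hgv : g (η₀ ((η₀⁻¹ * η) j)) = g (η₀ j) := by
        have hx : η₀ ((η₀⁻¹ * η) j) = η j := by
          simp [Equiv.Perm.mul_apply]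
        rw [hx, hgeq]
      exact Prod.ext hbl hgv
  rw [← step1]
  have step2 : (Finset.univ.filter fun τ : Equiv.Perm (Fin n) => G ∘ τ = G).card
      = Fintype.card {τ : Equiv.Perm (Fin n) // G ∘ τ = G} :=
    (Fintype.card_subtype _).symm
  rw [step2, DomMulAct.stabilizer_card, Fintype.prod_prod_type]
  rw [← Finset.prod_subset (Finset.subset_univ π) ?hout]
  case hout =>
    intro B _ hB
    apply Finset.prod_eq_one
    intro v _
    have hz : Fintype.card {j : Fin n // G j = (B, v)} = 0 := by
      rw [Fintype.card_eq_zero_iff]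
      refine ⟨fun ⟨j, hj⟩ => hB ?_⟩
      have hb1 : blockOf π hπ j = B := congrArg Prod.fst hj
      rw [← hb1]
      exact blockOf_mem hπ j
    rw [hz]
    rfl
  apply Finset.prod_congr rfl
  intro B hB
  apply Finset.prod_congr rfl
  intro v _
  congr 1
  rw [Fintype.card_subtype]
  have hfil : (Finset.univ.filter fun j => G j = (B, v))
      = B.filter fun j => g (η₀ j) = v := by
    ext j
    simp only [Finset.mem_filter, Finset.mem_univ, true_and, hG, Prod.mk.injEq]
    constructor
    · rintro ⟨h1, h2⟩
      exact ⟨by rw [← h1]; exact mem_blockOf hπ j, h2⟩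
    · rintro ⟨h1, h2⟩
      exact ⟨blockOf_eq hπ hB h1, h2⟩
  rw [hfil]
  apply Finset.card_bij (fun j _ => η₀ j)
  · intro j hj
    rw [Finset.mem_filter] at hj ⊢
    exact ⟨hη₀f B hB j hj.1, hj.2⟩
  · intro j₁ h₁ j₂ h₂ h
    exact η₀.injective h
  · intro k hk
    rw [Finset.mem_filter] at hk
    refine ⟨η₀⁻¹ k, Finset.mem_filter.mpr ⟨fixesBlocks_inv hη₀f B hB k hk.1, ?_⟩,
      η₀.apply_symm_apply k⟩
    rw [show η₀ (η₀⁻¹ k) = k from η₀.apply_symm_apply k]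
    exact hk.2

end Aux
/-- For every set partition `π` of `[n]`,
`h_π = Σ_{σ ⊢ [n]} λ(σ∧π)! · m_σ` in `FreeAlgebra ℚ (Fin N)`, where `λ(σ∧π)!` is the
product of the factorials of the block sizes of the common refinement `σ∧π`
(whose blocks are the nonempty intersections `B ∩ C` of blocks of `π` and `σ`). -/
theorem h_eq_sum_factorial_m (N n : ℕ) (hN : 0 < N) (hn : 0 < n)
    (π : Finset (Finset (Fin n))) (hπ : IsSetPartition π) :
    hNC N π =
      ∑ σ ∈ Finset.univ.filter (fun σ : Finset (Finset (Fin n)) => IsSetPartition σ),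
        ((∏ B ∈ π, ∏ C ∈ σ, (B ∩ C).card.factorial : ℕ) : ℚ) • mNC N σ := by
  classical
  set c : (Fin n → Fin N) → ℕ :=
    fun g => ∏ B ∈ π, ∏ C ∈ kerPart g, (B ∩ C).card.factorial with hc
  -- rewriting the coefficient as a product over all values
  have coeff : ∀ g : Fin n → Fin N,
      c g = ∏ B ∈ π, ∏ v : Fin N, (B.filter fun j => g j = v).card.factorial := by
    intro g
    rw [hc]
    apply Finset.prod_congr rfl
    intro B _
    have hker : kerPart g
        = (Finset.univ.filter fun v : Fin N =>
            (Finset.univ.filter fun j : Fin n => g j = v).Nonempty).image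
            fun v => Finset.univ.filter fun j : Fin n => g j = v := by
      rw [kerPart, Finset.filter_image]
    have hinj : ∀ x ∈ (Finset.univ.filter fun v : Fin N =>
          (Finset.univ.filter fun j : Fin n => g j = v).Nonempty),
        ∀ y ∈ (Finset.univ.filter fun v : Fin N =>
          (Finset.univ.filter fun j : Fin n => g j = v).Nonempty),
        (Finset.univ.filter fun j : Fin n => g j = x)
          = (Finset.univ.filter fun j : Fin n => g j = y) → x = y := by
      intro x hx y hy hxy
      obtain ⟨j, hj⟩ := (Finset.mem_filter.mp hx).2
      have hx' : g j = x := (Finset.mem_filter.mp hj).2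
      have hjy : j ∈ Finset.univ.filter fun j : Fin n => g j = y := by
        rw [← hxy]; exact hj
      have hy' : g j = y := (Finset.mem_filter.mp hjy).2
      rw [← hx', hy']
    rw [hker, Finset.prod_image hinj]
    refine (Finset.prod_subset (Finset.filter_subset _ _) ?_).trans ?_
    · intro v _ hv
      have hne : ¬ (Finset.univ.filter fun j : Fin n => g j = v).Nonempty :=
        fun h => hv (Finset.mem_filter.mpr ⟨Finset.mem_univ v, h⟩)
      have hemp : (Finset.univ.filter fun j : Fin n => g j = v) = ∅ :=
        Finset.not_nonempty_iff_eq_empty.mp hne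
      rw [hemp, Finset.inter_empty, Finset.card_empty]
      rfl
    · apply Finset.prod_congr rfl
      intro v _
      congr 2
      ext j
      simp [Finset.mem_inter, Finset.mem_filter]
  -- the right-hand side as a sum over all functions
  have RHS : (∑ σ ∈ Finset.univ.filter (fun σ : Finset (Finset (Fin n)) => IsSetPartition σ),
        ((∏ B ∈ π, ∏ C ∈ σ, (B ∩ C).card.factorial : ℕ) : ℚ) • mNC N σ)
      = ∑ f : Fin n → Fin N, (c f : ℚ) • ncMonomial f := by
    have expand : ∀ σ : Finset (Finset (Fin n)),
        ((∏ B ∈ π, ∏ C ∈ σ, (B ∩ C).card.factorial : ℕ) : ℚ) • mNC N σ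
          = ∑ f : Fin n → Fin N,
              if (∀ j k : Fin n, f j = f k ↔ sameBlock σ j k) then
                ((∏ B ∈ π, ∏ C ∈ σ, (B ∩ C).card.factorial : ℕ) : ℚ) • ncMonomial f
              else 0 := by
      intro σ
      simp only [mNC]
      rw [Finset.smul_sum, Finset.sum_filter]
    rw [Finset.sum_congr rfl fun σ _ => expand σ, Finset.sum_comm]
    apply Finset.sum_congr rfl
    intro f _
    rw [Finset.sum_eq_single_of_mem (kerPart f)
        (Finset.mem_filter.mpr ⟨Finset.mem_univ _, kerPart_isPartition f⟩)
        ?h0]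
    · rw [if_pos (fun j k => kerPart_pred f j k)]
    case h0 =>
      intro σ hσ hne
      rw [if_neg]
      intro hpred
      exact hne (eq_kerPart (Finset.mem_filter.mp hσ).2 hpred)
  -- the left-hand side as a sum over all functions
  have inner : ∀ η : Equiv.Perm (Fin n),
      (∑ f ∈ Finset.univ.filter (fun f : Fin n → Fin N =>
          ∀ j k : Fin n, j < k → sameBlock π j k → f j ≤ f k),
        ncMonomial fun j => f (η j))
      = ∑ f ∈ Finset.univ.filter (fun f : Fin n → Fin N => monoP π (f ∘ ⇑η⁻¹)),
          ncMonomial f := by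
    intro η
    have h1 : ∀ f ∈ Finset.univ.filter (fun f : Fin n → Fin N =>
        ∀ j k : Fin n, j < k → sameBlock π j k → f j ≤ f k),
        f ∘ ⇑η ∈ Finset.univ.filter (fun f : Fin n → Fin N => monoP π (f ∘ ⇑η⁻¹)) := by
      intro f hf
      rw [Finset.mem_filter] at hf ⊢
      refine ⟨Finset.mem_univ _, ?_⟩
      have hcomp : (f ∘ ⇑η) ∘ ⇑η⁻¹ = f := by funext x; simp
      rw [hcomp]
      exact hf.2
    have h2 : ∀ f ∈ Finset.univ.filter (fun f : Fin n → Fin N => monoP π (f ∘ ⇑η⁻¹)),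
        f ∘ ⇑η⁻¹ ∈ Finset.univ.filter (fun f : Fin n → Fin N =>
          ∀ j k : Fin n, j < k → sameBlock π j k → f j ≤ f k) := by
      intro f hf
      rw [Finset.mem_filter] at hf ⊢
      exact ⟨Finset.mem_univ _, hf.2⟩
    exact Finset.sum_nbij' (fun f => f ∘ ⇑η) (fun f => f ∘ ⇑η⁻¹) h1 h2
      (fun f _ => by funext x; simp) (fun f _ => by funext x; simp)
      (fun f _ => rfl)
  have LHS : hNC N π = ∑ f : Fin n → Fin N,
      ((Finset.univ.filter fun η : Equiv.Perm (Fin n) =>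
          fixesBlocks π η ∧ monoP π (f ∘ ⇑η)).card) • ncMonomial f := by
    calc hNC N π
        = ∑ η ∈ Finset.univ.filter (fixesBlocks π),
            ∑ f ∈ Finset.univ.filter (fun f : Fin n → Fin N => monoP π (f ∘ ⇑η⁻¹)),
              ncMonomial f := Finset.sum_congr rfl fun η _ => inner η
      _ = ∑ η ∈ Finset.univ.filter (fixesBlocks π), ∑ f : Fin n → Fin N,
            if monoP π (f ∘ ⇑η⁻¹) then ncMonomial f else 0 :=
          Finset.sum_congr rfl fun η _ => Finset.sum_filter _ _
      _ = ∑ f : Fin n → Fin N, ∑ η ∈ Finset.univ.filter (fixesBlocks π),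
            if monoP π (f ∘ ⇑η⁻¹) then ncMonomial f else 0 := Finset.sum_comm
      _ = ∑ f : Fin n → Fin N,
            ((Finset.univ.filter fun η : Equiv.Perm (Fin n) =>
                fixesBlocks π η ∧ monoP π (f ∘ ⇑η⁻¹)).card) • ncMonomial f := by
          apply Finset.sum_congr rfl
          intro f _
          rw [← Finset.sum_filter, Finset.filter_filter, Finset.sum_const]
      _ = ∑ f : Fin n → Fin N,
            ((Finset.univ.filter fun η : Equiv.Perm (Fin n) =>
                fixesBlocks π η ∧ monoP π (f ∘ ⇑η)).card) • ncMonomial f := by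
          apply Finset.sum_congr rfl
          intro f _
          congr 1
          apply Finset.card_bij (fun η _ => η⁻¹)
          · intro η hη
            rw [Finset.mem_filter] at hη ⊢
            exact ⟨Finset.mem_univ _, fixesBlocks_inv hη.2.1, hη.2.2⟩
          · intro η₁ h₁ η₂ h₂ h
            exact inv_injective h
          · intro η hη
            rw [Finset.mem_filter] at hη
            refine ⟨η⁻¹, Finset.mem_filter.mpr ⟨Finset.mem_univ _,
              fixesBlocks_inv hη.2.1, ?_⟩, inv_inv η⟩
            rw [inv_inv]
            exact hη.2.2
  rw [LHS, RHS]
  apply Finset.sum_congr rfl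
  intro f _
  rw [count_sorting hπ f, ← coeff f]
  exact (Nat.cast_smul_eq_nsmul ℚ _ _).symm

end NCSymPaper
end
end

section
/- For all integer partitions μ ⊆ λ with n = |λ| − |μ| ≥ 1, the projection of the source skew Schur function in noncommuting variables is the skew Schur polynomial: ρ(s_{[λ/μ]}) = s_{λ/μ} in MvPolynomial (Fin N) ℚ. -/
open scoped BigOperators Classical

noncomputable section

namespace NCSymPaper

section IntervalHelpers

variable {l n : ℕ}

/-- Partial sums of block sizes. -/
def Spart (b : Fin l → ℕ) (m : ℕ) : ℕ :=
  ∑ j ∈ Finset.univ.filter (fun j : Fin l => (j : ℕ) < m), b j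

lemma Spart_mono (b : Fin l → ℕ) : Monotone (Spart b) := by
  intro m m' h
  apply Finset.sum_le_sum_of_subset
  apply Finset.monotone_filter_right
  intro j hj
  omega

lemma Spart_succ (b : Fin l → ℕ) (m : ℕ) (hm : m < l) :
    Spart b (m + 1) = Spart b m + b ⟨m, hm⟩ := by
  unfold Spart
  rw [show (Finset.univ.filter (fun j : Fin l => (j : ℕ) < m + 1)) =
      insert ⟨m, hm⟩ (Finset.univ.filter (fun j : Fin l => (j : ℕ) < m)) by
    ext j; simp [Fin.ext_iff]; omega]
  rw [Finset.sum_insert (by simp)]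
  ring

lemma Spart_top (b : Fin l → ℕ) : Spart b l = ∑ i, b i := by
  unfold Spart
  rw [Finset.filter_true_of_mem (fun j _ => j.isLt)]

lemma Spart_add_le (b : Fin l → ℕ) (i : Fin l) : Spart b i + b i ≤ ∑ j, b j := by
  rw [← Spart_top b, ← Spart_succ b i i.isLt]
  exact Spart_mono b i.isLt

lemma Spart_add_le' (b : Fin l → ℕ) {i i' : Fin l} (h : (i : ℕ) < i') :
    Spart b i + b i ≤ Spart b i' := by
  rw [← Spart_succ b i i.isLt]
  exact Spart_mono b h

/-- Index of the block containing position `k`. -/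
def cIdx (b : Fin l → ℕ) (k : ℕ) : ℕ :=
  Nat.findGreatest (fun m => Spart b m ≤ k) l

lemma Spart_cIdx_le (b : Fin l → ℕ) (k : ℕ) : Spart b (cIdx b k) ≤ k := by
  apply Nat.findGreatest_spec (P := fun m => Spart b m ≤ k) (Nat.zero_le l)
  simp [Spart]

lemma cIdx_lt (b : Fin l → ℕ) {k : ℕ} (hk : k < ∑ i, b i) : cIdx b k < l := by
  have hle : cIdx b k ≤ l := Nat.findGreatest_le l
  rcases lt_or_eq_of_le hle with h | h
  · exact h
  · exfalso
    have := Spart_cIdx_le b k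
    rw [h, Spart_top] at this
    omega

lemma lt_Spart_cIdx (b : Fin l → ℕ) {k : ℕ} (hk : k < ∑ i, b i) :
    k < Spart b (cIdx b k) + b ⟨cIdx b k, cIdx_lt b hk⟩ := by
  by_contra hcon
  push_neg at hcon
  have hlt : cIdx b k < l := cIdx_lt b hk
  have h1 : Spart b (cIdx b k + 1) ≤ k := by
    rw [Spart_succ b _ hlt]; exact hcon
  have h2 : cIdx b k + 1 ≤ l := hlt
  exact Nat.findGreatest_is_greatest (Nat.lt_succ_self _) h2 h1

lemma cIdx_unique (b : Fin l → ℕ) {k : ℕ} {i : Fin l}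
    (h1 : Spart b i ≤ k) (h2 : k < Spart b i + b i) : cIdx b k = i := by
  have hk : k < ∑ j, b j := lt_of_lt_of_le h2 (Spart_add_le b i)
  have hlt := cIdx_lt b hk
  have hs1 := Spart_cIdx_le b k
  have hs2 := lt_Spart_cIdx b hk
  by_contra hne
  rcases Nat.lt_or_ge (cIdx b k) i with h | h
  · have := Spart_add_le' b (i := (⟨cIdx b k, hlt⟩ : Fin l)) (i' := i) h
    simp only at this
    omega
  · have h' : (i : ℕ) < cIdx b k := by omega
    have := Spart_add_le' b (i := i) (i' := (⟨cIdx b k, hlt⟩ : Fin l)) h'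
    simp only at this
    omega

/-- The `i`-th interval block as a finset of `Fin n`. -/
def Blk (b : Fin l → ℕ) (i : Fin l) : Finset (Fin n) :=
  Finset.univ.filter (fun k : Fin n => Spart b i ≤ (k : ℕ) ∧ (k : ℕ) < Spart b i + b i)

variable {b : Fin l → ℕ} (hb : ∑ i, b i = n)

lemma intervalBlocks_eq :
    intervalBlocks n b = (Finset.univ.image (Blk (n := n) b)).filter (·.Nonempty) := by
  unfold intervalBlocks
  have himg : ((Finset.univ : Finset (Fin l)).image fun i =>
      (Finset.univ : Finset (Fin n)).filter fun k : Fin n =>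
        (∑ j ∈ Finset.univ.filter fun j => j < i, b j) ≤ (k : ℕ) ∧
          (k : ℕ) < (∑ j ∈ Finset.univ.filter fun j => j < i, b j) + b i) =
      Finset.univ.image (Blk (n := n) b) := by
    apply Finset.image_congr
    intro i _
    apply Finset.filter_congr
    intro k _
    have h2 : (Finset.univ.filter (fun j : Fin l => j < i)) =
        (Finset.univ.filter (fun j : Fin l => (j : ℕ) < (i : ℕ))) := by
      apply Finset.filter_congr; intro j _; exact Fin.lt_def
    rw [show (∑ j ∈ Finset.univ.filter (fun j : Fin l => j < i), b j) = Spart b i by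
      rw [h2]; rfl]
  rw [himg]

lemma mem_intervalBlocks {B : Finset (Fin n)} :
    B ∈ intervalBlocks n b ↔ (∃ i, B = Blk b i) ∧ B.Nonempty := by
  rw [intervalBlocks_eq (b := b)]
  simp only [Finset.mem_filter, Finset.mem_image, Finset.mem_univ, true_and]
  constructor
  · rintro ⟨⟨i, rfl⟩, h⟩; exact ⟨⟨i, rfl⟩, h⟩
  · rintro ⟨⟨i, rfl⟩, h⟩; exact ⟨⟨i, rfl⟩, h⟩

include hb

lemma mem_Blk_iff {k : Fin n} {i : Fin l} : k ∈ Blk b i ↔ cIdx b (k : ℕ) = i := by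
  constructor
  · intro h
    simp only [Blk, Finset.mem_filter] at h
    exact cIdx_unique b h.2.1 h.2.2
  · intro h
    have hk : (k : ℕ) < ∑ i, b i := by rw [hb]; exact k.isLt
    have hs1 := Spart_cIdx_le b (k : ℕ)
    have hs2 := lt_Spart_cIdx b hk
    simp only [Blk, Finset.mem_filter]
    refine ⟨Finset.mem_univ _, ?_, ?_⟩
    · rw [← h]; exact hs1
    · have : (⟨cIdx b (k:ℕ), cIdx_lt b hk⟩ : Fin l) = i := Fin.ext h
      rw [← this]
      exact hs2

lemma card_Blk (i : Fin l) : (Blk (n := n) b i).card = b i := by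
  have hle : Spart b i + b i ≤ n := by rw [← hb]; exact Spart_add_le b i
  have key : (Blk (n := n) b i).card = (Finset.Ico (Spart b i) (Spart b i + b i)).card := by
    refine Finset.card_bij (fun k _ => (k : ℕ)) ?_ ?_ ?_
    · intro k hk
      simp only [Blk, Finset.mem_filter] at hk
      simp only [Finset.mem_Ico]
      omega
    · intro k _ k' _ h
      exact Fin.ext h
    · intro m hm
      simp only [Finset.mem_Ico] at hm
      refine ⟨⟨m, by omega⟩, ?_, rfl⟩
      simp only [Blk, Finset.mem_filter, Finset.mem_univ, true_and]
      omega
  rw [key]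
  simp

lemma sameBlock_iff {j k : Fin n} :
    sameBlock (intervalBlocks n b) j k ↔ cIdx b (j : ℕ) = cIdx b (k : ℕ) := by
  constructor
  · rintro ⟨B, hB, hj, hk⟩
    rw [mem_intervalBlocks] at hB
    obtain ⟨⟨i, rfl⟩, _⟩ := hB
    rw [mem_Blk_iff hb] at hj hk
    rw [hj, hk]
  · intro h
    have hk : (j : ℕ) < ∑ i, b i := by rw [hb]; exact j.isLt
    refine ⟨Blk b ⟨cIdx b (j : ℕ), cIdx_lt b hk⟩, ?_, ?_, ?_⟩
    · rw [mem_intervalBlocks]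
      exact ⟨⟨_, rfl⟩, ⟨j, (mem_Blk_iff hb).2 rfl⟩⟩
    · exact (mem_Blk_iff hb).2 rfl
    · exact (mem_Blk_iff hb).2 h.symm

lemma fixesBlocks_iff_s3 {η : Equiv.Perm (Fin n)} :
    fixesBlocks (intervalBlocks n b) η ↔ ∀ k : Fin n, cIdx b ((η k : Fin n) : ℕ) = cIdx b (k : ℕ) := by
  constructor
  · intro h k
    have hk : (k : ℕ) < ∑ i, b i := by rw [hb]; exact k.isLt
    have hmem : k ∈ Blk b ⟨cIdx b (k : ℕ), cIdx_lt b hk⟩ := (mem_Blk_iff hb).2 rfl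
    have hπ : Blk (n := n) b ⟨cIdx b (k : ℕ), cIdx_lt b hk⟩ ∈ intervalBlocks n b := by
      rw [mem_intervalBlocks]; exact ⟨⟨_, rfl⟩, ⟨k, hmem⟩⟩
    have := h _ hπ k hmem
    rw [mem_Blk_iff hb] at this
    exact this
  · intro h B hB j hj
    rw [mem_intervalBlocks] at hB
    obtain ⟨⟨i, rfl⟩, _⟩ := hB
    rw [mem_Blk_iff hb] at hj ⊢
    rw [h j, hj]

end IntervalHelpers
section EquivHelpers

variable {l n : ℕ} {b : Fin l → ℕ} (hb : ∑ i, b i = n)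

/-- Equivalence between the disjoint union of the blocks and `Fin n`. -/
def eS : (Σ i : Fin l, Fin (b i)) ≃ Fin n where
  toFun x := ⟨Spart b x.1 + x.2, by
    have h1 := x.2.isLt
    have h2 := Spart_add_le b x.1
    omega⟩
  invFun k := ⟨⟨cIdx b (k : ℕ), cIdx_lt b (by rw [hb]; exact k.isLt)⟩,
    ⟨(k : ℕ) - Spart b (cIdx b (k : ℕ)), by
      have h1 := Spart_cIdx_le b (k : ℕ)
      have h2 := lt_Spart_cIdx b (k := (k : ℕ)) (by rw [hb]; exact k.isLt)
      omega⟩⟩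
  left_inv := by
    rintro ⟨i, j⟩
    have h1 : cIdx b (Spart b i + (j : ℕ)) = (i : ℕ) :=
      cIdx_unique b (Nat.le_add_right _ _) (by have := j.isLt; omega)
    refine Sigma.ext (Fin.ext ?_) ((Fin.heq_ext_iff ?_).2 ?_)
    · exact h1
    · congr 1
      exact Fin.ext h1
    · simp only
      rw [h1]
      omega
  right_inv := by
    intro k
    apply Fin.ext
    have h1 := Spart_cIdx_le b (k : ℕ)
    simp only
    omega

lemma eS_val (i : Fin l) (j : Fin (b i)) :
    ((eS hb ⟨i, j⟩ : Fin n) : ℕ) = Spart b i + j := rfl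

lemma cIdx_eS (i : Fin l) (j : Fin (b i)) :
    cIdx b ((eS hb ⟨i, j⟩ : Fin n) : ℕ) = (i : ℕ) :=
  cIdx_unique b (Nat.le_add_right _ _) (by have := j.isLt; simp only [eS_val]; omega)

include hb

lemma card_fixes :
    (Finset.univ.filter (fixesBlocks (intervalBlocks n b))).card = ∏ i, (b i).factorial := by
  classical
  set cg : Fin n → Fin l := fun k => ⟨cIdx b (k : ℕ), cIdx_lt b (by rw [hb]; exact k.isLt)⟩
    with hcg
  have h1 : Finset.univ.filter (fixesBlocks (intervalBlocks n b)) =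
      Finset.univ.filter (fun η : Equiv.Perm (Fin n) => cg ∘ η = cg) := by
    apply Finset.filter_congr
    intro η _
    rw [fixesBlocks_iff_s3 hb]
    constructor
    · intro h
      funext k
      exact Fin.ext (h k)
    · intro h k
      exact congrArg Fin.val (congrFun h k)
  rw [h1]
  have h2 : (Finset.univ.filter (fun η : Equiv.Perm (Fin n) => cg ∘ η = cg)).card
      = Fintype.card {η : Equiv.Perm (Fin n) // cg ∘ η = cg} := (Fintype.card_subtype _).symm
  rw [h2, DomMulAct.stabilizer_card]
  apply Finset.prod_congr rfl
  intro i _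
  congr 1
  rw [Fintype.card_subtype, ← card_Blk hb i]
  congr 1
  ext k
  simp only [Finset.mem_filter, Finset.mem_univ, true_and, mem_Blk_iff hb, hcg, Fin.ext_iff]

lemma sum_blockMonotone (N : ℕ) :
    ∑ f ∈ Finset.univ.filter (fun f : Fin n → Fin N =>
        ∀ j k : Fin n, j < k → sameBlock (intervalBlocks n b) j k → f j ≤ f k),
      ∏ k, MvPolynomial.X (f k)
      = ∏ i : Fin l, hPoly N (b i) := by
  classical
  have hP : ∀ i : Fin l, hPoly N (b i) =
      ∑ g ∈ Finset.univ.filter (fun g : Fin (b i) → Fin N => Monotone g),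
        ∏ j, MvPolynomial.X (g j) := by
    intro i
    rw [hPoly, if_pos (Int.natCast_nonneg _)]
    rfl
  rw [Finset.prod_congr rfl (fun i _ => hP i), Finset.prod_univ_sum]
  refine Finset.sum_nbij' (fun f => fun i j => f (eS hb ⟨i, j⟩))
    (fun p => fun k => p ((eS hb).symm k).1 ((eS hb).symm k).2) ?_ ?_ ?_ ?_ ?_
  · intro f hf
    simp only [Finset.mem_filter, Finset.mem_univ, true_and] at hf
    rw [Fintype.mem_piFinset]
    intro i
    simp only [Finset.mem_filter, Finset.mem_univ, true_and]
    intro j j' hjj'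
    rcases lt_or_eq_of_le hjj' with h | h
    · apply hf
      · rw [Fin.lt_def, eS_val, eS_val]
        omega
      · rw [sameBlock_iff hb, cIdx_eS, cIdx_eS]
    · rw [h]
  · intro p hp
    rw [Fintype.mem_piFinset] at hp
    simp only [Finset.mem_filter, Finset.mem_univ, true_and] at hp ⊢
    intro j k hjk hsb
    rw [sameBlock_iff hb] at hsb
    obtain ⟨⟨i1, j1⟩, h1⟩ : ∃ x, (eS hb).symm j = x := ⟨_, rfl⟩
    obtain ⟨⟨i2, j2⟩, h2⟩ : ∃ x, (eS hb).symm k = x := ⟨_, rfl⟩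
    have hj' : eS hb ⟨i1, j1⟩ = j := by rw [← h1, Equiv.apply_symm_apply]
    have hk' : eS hb ⟨i2, j2⟩ = k := by rw [← h2, Equiv.apply_symm_apply]
    have hjv : (j : ℕ) = Spart b i1 + j1 := by rw [← hj', eS_val]
    have hkv : (k : ℕ) = Spart b i2 + j2 := by rw [← hk', eS_val]
    have hi12 : i1 = i2 := by
      apply Fin.ext
      have e1 : cIdx b (j : ℕ) = (i1 : ℕ) := by rw [← hj']; exact cIdx_eS hb i1 j1
      have e2 : cIdx b (k : ℕ) = (i2 : ℕ) := by rw [← hk']; exact cIdx_eS hb i2 j2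
      omega
    subst hi12
    rw [h1, h2]
    show p i1 j1 ≤ p i1 j2
    apply hp i1
    rw [Fin.le_def]
    rw [Fin.lt_def, hjv, hkv] at hjk
    omega
  · intro f _
    funext k
    show f (eS hb ((eS hb).symm k)) = f k
    rw [Equiv.apply_symm_apply]
  · intro p _
    funext i j
    show p ((eS hb).symm (eS hb ⟨i, j⟩)).1 ((eS hb).symm (eS hb ⟨i, j⟩)).2 = p i j
    have hs : (eS hb).symm (eS hb ⟨i, j⟩) = ⟨i, j⟩ := Equiv.symm_apply_apply _ _
    rw [hs]
  · intro f _
    rw [← Equiv.prod_comp (eS hb) (fun k => MvPolynomial.X (f k)),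
      ← Finset.univ_sigma_univ, Finset.prod_sigma]

end EquivHelpers
section RhoHelpers

lemma rho_ncMonomial {N n : ℕ} (g : Fin n → Fin N) :
    rho N (ncMonomial g) = ∏ k, MvPolynomial.X (g k) := by
  unfold rho ncMonomial
  rw [map_list_prod, List.map_ofFn, List.prod_ofFn]
  apply Finset.prod_congr rfl
  intro k _
  simp [FreeAlgebra.lift_ι_apply]

lemma rho_hNC {N l n : ℕ} {b : Fin l → ℕ} (hb : ∑ i, b i = n) :
    rho N (hNC N (intervalBlocks n b)) =
      (∏ i, (b i).factorial) • ∏ i : Fin l, hPoly N (b i) := by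
  unfold hNC
  rw [map_sum]
  have hterm : ∀ η ∈ Finset.univ.filter (fixesBlocks (intervalBlocks n b)),
      rho N (∑ f ∈ Finset.univ.filter (fun f : Fin n → Fin N =>
          ∀ j k : Fin n, j < k → sameBlock (intervalBlocks n b) j k → f j ≤ f k),
        ncMonomial fun j => f (η j)) =
      ∑ f ∈ Finset.univ.filter (fun f : Fin n → Fin N =>
          ∀ j k : Fin n, j < k → sameBlock (intervalBlocks n b) j k → f j ≤ f k),
        ∏ k, MvPolynomial.X (f k) := by
    intro η _
    rw [map_sum]
    apply Finset.sum_congr rfl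
    intro f _
    rw [rho_ncMonomial]
    exact Equiv.prod_comp η (fun k => MvPolynomial.X (f k))
  rw [Finset.sum_congr rfl hterm, Finset.sum_const, card_fixes hb, sum_blockMonotone hb N]

lemma sum_univ_get_nat (lam : List ℕ) : ∑ i : Fin lam.length, lam.get i = lam.sum := by
  simp only [List.get_eq_getElem]
  exact Fin.sum_univ_getElem lam

lemma sum_getD_of_le (mu : List ℕ) {L : ℕ} (h : mu.length ≤ L) :
    ∑ i : Fin L, mu.getD (i : ℕ) 0 = mu.sum := by
  rw [Fin.sum_univ_eq_sum_range (fun i => mu.getD i 0) L]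
  rw [← Finset.sum_subset (Finset.range_subset_range.2 h) (fun x _ hx => by
    rw [List.getD_eq_default]
    simpa using hx)]
  rw [← sum_univ_get_nat mu]
  rw [show (∑ i : Fin mu.length, mu.get i) = ∑ i : Fin mu.length, mu.getD (i : ℕ) 0 from
    Finset.sum_congr rfl (fun i _ => by simp [List.getD_eq_getElem mu 0 i.isLt])]
  exact (Fin.sum_univ_eq_sum_range (fun i => mu.getD i 0) mu.length).symm

end RhoHelpers
/-- `ρ(s_{[λ/μ]}) = s_{λ/μ}`. -/
theorem rho_source_skew_schur (N n : ℕ) (hN : 0 < N) (lam mu : List ℕ)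
    (hlam : IsPartitionList lam) (hmu : IsPartitionList mu)
    (hlen : mu.length ≤ lam.length) (hle : ∀ i, mu.getD i 0 ≤ lam.getD i 0)
    (hsum : lam.sum = mu.sum + n) (hn : 1 ≤ n) :
    rho N (sNC N n id lam mu) = schurPoly N lam mu := by
  classical
  unfold sNC schurPoly
  rw [← Matrix.det_transpose, Matrix.det_apply', map_sum]
  apply Finset.sum_congr rfl
  intro ε _
  by_cases hpos : ∀ i, 0 ≤ betaInt lam mu ε i
  · rw [if_pos hpos, map_smul]
    have hbeq : ∀ i, (((betaInt lam mu ε i).toNat : ℤ)) = betaInt lam mu ε i :=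
      fun i => Int.toNat_of_nonneg (hpos i)
    have hb : ∑ i, (betaInt lam mu ε i).toNat = n := by
      have hz : ((∑ i, (betaInt lam mu ε i).toNat : ℕ) : ℤ) = ∑ i, betaInt lam mu ε i := by
        push_cast
        exact Finset.sum_congr rfl (fun i _ => hbeq i)
      have hs : ∑ i, betaInt lam mu ε i = (lam.sum : ℤ) - (mu.sum : ℤ) := by
        unfold betaInt
        rw [show (∑ i : Fin lam.length, ((lam.get i : ℤ) - (mu.getD ((ε i : Fin lam.length) : ℕ) 0 : ℤ)
            + (((ε i : Fin lam.length) : ℕ) : ℤ) - ((i : ℕ) : ℤ))) =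
            (∑ i : Fin lam.length, (lam.get i : ℤ))
            - (∑ i : Fin lam.length, ((mu.getD ((ε i : Fin lam.length) : ℕ) 0 : ℕ) : ℤ))
            + (∑ i : Fin lam.length, (((ε i : Fin lam.length) : ℕ) : ℤ))
            - (∑ i : Fin lam.length, ((i : ℕ) : ℤ)) by
          rw [← Finset.sum_sub_distrib, ← Finset.sum_add_distrib, ← Finset.sum_sub_distrib]]
        rw [Equiv.sum_comp ε (fun j : Fin lam.length => ((mu.getD (j : ℕ) 0 : ℕ) : ℤ)),
          Equiv.sum_comp ε (fun j : Fin lam.length => ((j : ℕ) : ℤ))]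
        have h1 : ∑ i : Fin lam.length, (lam.get i : ℤ) = (lam.sum : ℤ) := by
          rw [← Nat.cast_sum]
          exact_mod_cast congrArg (Nat.cast : ℕ → ℤ) (sum_univ_get_nat lam)
        have h2 : ∑ i : Fin lam.length, ((mu.getD (i : ℕ) 0 : ℕ) : ℤ) = (mu.sum : ℤ) := by
          rw [← Nat.cast_sum]
          exact_mod_cast congrArg (Nat.cast : ℕ → ℤ) (sum_getD_of_le mu hlen)
        rw [h1, h2]
        ring
      omega
    have hid : applyMap (id : Fin n → Fin n)
        (intervalBlocks n fun i => (betaInt lam mu ε i).toNat) =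
        intervalBlocks n fun i => (betaInt lam mu ε i).toNat := by
      unfold applyMap
      simp
    rw [hid, rho_hNC hb, ← Nat.cast_smul_eq_nsmul ℚ, smul_smul]
    have hcoef : (((Equiv.Perm.sign ε : ℤ) : ℚ) *
        ∏ i, 1 / ((betaInt lam mu ε i).toNat.factorial : ℚ)) *
        ((∏ i, ((betaInt lam mu ε i).toNat).factorial : ℕ) : ℚ) =
        ((Equiv.Perm.sign ε : ℤ) : ℚ) := by
      push_cast
      rw [mul_assoc, ← Finset.prod_mul_distrib]
      rw [Finset.prod_congr rfl (fun i _ => one_div_mul_cancel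
        (show (((betaInt lam mu ε i).toNat.factorial : ℚ)) ≠ 0 by
          exact_mod_cast (Nat.factorial_ne_zero _)))]
      simp
    rw [hcoef, MvPolynomial.smul_eq_C_mul]
    congr 1
    · apply Finset.prod_congr rfl
      intro i _
      rw [Matrix.transpose_apply, Matrix.of_apply]
      congr 1
      rw [hbeq i]
      unfold betaInt
      ring
  · rw [if_neg hpos]
    push_neg at hpos
    obtain ⟨i0, hi0⟩ := hpos
    rw [map_zero]
    symm
    rw [Finset.prod_eq_zero (Finset.mem_univ i0) ?_, mul_zero]
    rw [Matrix.transpose_apply, Matrix.of_apply, hPoly, if_neg]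
    unfold betaInt at hi0
    omega
end NCSymPaper
end
end

section
/- For all integer partitions λ of n ≥ 1 and μ of m ≥ 1, the source Schur functions in noncommuting variables satisfy the product rule s_{[λ]} · s_{[μ]} = s_{[λ·μ]} + s_{[λ⊙μ]} in F = FreeAlgebra ℚ (Fin N), where λ·μ and λ⊙μ are the concatenation and near concatenation skew diagrams. -/
open scoped BigOperators Classical

noncomputable section

namespace NCSymPaper

set_option maxRecDepth 8000

section AuxDev


lemma hNC_fin_zero (N : ℕ) (π : Finset (Finset (Fin 0))) : hNC N π = 1 := by
  have h1 : (Finset.univ.filter (fixesBlocks π)) = (Finset.univ : Finset (Equiv.Perm (Fin 0))) := by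
    apply Finset.filter_true_of_mem
    intro η _ B hB j hj
    exact j.elim0
  have h2 : (Finset.univ.filter (fun f : Fin 0 → Fin N =>
      ∀ j k : Fin 0, j < k → sameBlock π j k → f j ≤ f k)) = Finset.univ := by
    apply Finset.filter_true_of_mem
    intro f _ j k
    exact j.elim0
  rw [hNC, h1, h2]
  have : ∀ (η : Equiv.Perm (Fin 0)) (f : Fin 0 → Fin 0 → Fin N), True := fun _ _ => trivial
  simp [ncMonomial, List.ofFn_zero, Finset.card_univ]

def HH (N k : ℕ) : FreeAlgebra ℚ (Fin N) := hNC N (intervalBlocks k (fun _ : Fin 1 => k))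

def Hfun (N : ℕ) (k : ℤ) : FreeAlgebra ℚ (Fin N) :=
  if 0 ≤ k then (1 / ((k.toNat).factorial : ℚ)) • HH N k.toNat else 0

lemma HH_zero (N : ℕ) : HH N 0 = 1 := hNC_fin_zero N _

lemma Hfun_zero (N : ℕ) : Hfun N 0 = 1 := by
  simp [Hfun, HH_zero]

lemma Hfun_neg (N : ℕ) {k : ℤ} (h : k < 0) : Hfun N k = 0 := by
  simp [Hfun, not_le.2 h]

def Dt (N L : ℕ) (A : Fin L → Fin L → ℤ) : FreeAlgebra ℚ (Fin N) :=
  ∑ σ : Equiv.Perm (Fin L),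
    ((Equiv.Perm.sign σ : ℤ) : ℚ) • (List.ofFn fun i => Hfun N (A i (σ i))).prod

lemma Dt_cast (N : ℕ) {L₁ L₂ : ℕ} (h : L₁ = L₂) (A : Fin L₁ → Fin L₁ → ℤ) :
    Dt N L₁ A = Dt N L₂ (fun i j => A (Fin.cast h.symm i) (Fin.cast h.symm j)) := by
  subst h; rfl

lemma listProd_smul {N l : ℕ} (c : Fin l → ℚ) (x : Fin l → FreeAlgebra ℚ (Fin N)) :
    (List.ofFn fun i => c i • x i).prod = (∏ i, c i) • (List.ofFn x).prod := by
  induction l with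
  | zero => simp
  | succ l ih =>
    rw [List.ofFn_succ, List.ofFn_succ, List.prod_cons, List.prod_cons,
      ih (fun i => c i.succ) (fun i => x i.succ), Fin.prod_univ_succ,
      smul_mul_smul_comm]

lemma listProd_erase {M : Type*} [Monoid M] : ∀ {l : ℕ} (g : Fin (l + 1) → M)
    (r : Fin (l + 1)), g r = 1 →
    (List.ofFn g).prod = (List.ofFn (g ∘ r.succAbove)).prod := by
  intro l
  induction l with
  | zero =>
    intro g r hr
    have : r = 0 := by ext; omega
    subst this
    simp [hr, List.ofFn_succ, List.ofFn_zero]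
  | succ l ih =>
    intro g r hr
    refine Fin.cases ?_ ?_ r hr
    · intro h0
      rw [List.ofFn_succ, List.prod_cons, h0, one_mul, Fin.succAbove_zero]
      rfl
    · intro j hj
      rw [List.ofFn_succ (f := g), List.ofFn_succ (f := g ∘ (j.succ).succAbove),
        List.prod_cons, List.prod_cons]
      have h0 : (g ∘ (j.succ).succAbove) 0 = g 0 := by
        simp only [Function.comp_apply]
        congr 1
      rw [h0]
      congr 1
      have htail : (fun i : Fin l => (g ∘ (j.succ).succAbove) i.succ)
          = (fun i => ((fun i' : Fin (l+1) => g i'.succ) ∘ j.succAbove) i) := by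
        funext i
        simp only [Function.comp_apply]
        congr 1
        exact Fin.succ_succAbove_succ j i
      rw [htail]
      exact ih (fun i' => g i'.succ) j hj

lemma applyMap_id {n : ℕ} (π : Finset (Finset (Fin n))) : applyMap id π = π := by
  have : (fun B : Finset (Fin n) => B.image id) = id := by
    funext B; simp
  simp [applyMap, this]


def covers {n : ℕ} (π : Finset (Finset (Fin n))) : Prop := ∀ j : Fin n, ∃ B ∈ π, j ∈ B

def joinBlocks {n m : ℕ} (π : Finset (Finset (Fin n))) (σ : Finset (Finset (Fin m))) :
    Finset (Finset (Fin (n + m))) :=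
  π.image (Finset.image (Fin.castAdd m)) ∪ σ.image (Finset.image (Fin.natAdd n))

def permJoin {n m : ℕ} (p : Equiv.Perm (Fin n) × Equiv.Perm (Fin m)) :
    Equiv.Perm (Fin (n + m)) :=
  finSumFinEquiv.permCongr (p.1.sumCongr p.2)

variable {n m N : ℕ} {π : Finset (Finset (Fin n))} {σ : Finset (Finset (Fin m))}

lemma permJoin_castAdd (p : Equiv.Perm (Fin n) × Equiv.Perm (Fin m)) (i : Fin n) :
    permJoin p (Fin.castAdd m i) = Fin.castAdd m (p.1 i) := by
  simp [permJoin, Equiv.permCongr_apply, ← finSumFinEquiv_apply_left,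
    Equiv.symm_apply_apply]

lemma permJoin_natAdd (p : Equiv.Perm (Fin n) × Equiv.Perm (Fin m)) (i : Fin m) :
    permJoin p (Fin.natAdd n i) = Fin.natAdd n (p.2 i) := by
  simp [permJoin, Equiv.permCongr_apply, ← finSumFinEquiv_apply_right,
    Equiv.symm_apply_apply]

lemma permJoin_injective : Function.Injective (permJoin (n := n) (m := m)) := by
  intro p q h
  have h' : ∀ x, permJoin p x = permJoin q x := fun x => congrArg (fun e => e x) h
  have h1 : p.1 = q.1 := by
    ext i
    have := h' (Fin.castAdd m i)
    rw [permJoin_castAdd, permJoin_castAdd] at this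
    simpa [Fin.ext_iff] using this
  have h2 : p.2 = q.2 := by
    ext i
    have := h' (Fin.natAdd n i)
    rw [permJoin_natAdd, permJoin_natAdd] at this
    simpa [Fin.ext_iff] using this
  exact Prod.ext h1 h2

lemma exists_permJoin (η : Equiv.Perm (Fin (n + m)))
    (hlow : ∀ i : Fin n, ((η (Fin.castAdd m i)) : ℕ) < n)
    (hhigh : ∀ i : Fin m, n ≤ ((η (Fin.natAdd n i)) : ℕ)) :
    ∃ p, permJoin p = η := by
  have hinj1 : Function.Injective
      (fun i : Fin n => (⟨(η (Fin.castAdd m i) : ℕ), hlow i⟩ : Fin n)) := by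
    intro a b hab
    simp only [Fin.mk.injEq] at hab
    have h1 := η.injective (Fin.ext hab)
    have h2 := congrArg Fin.val h1
    simp only [Fin.coe_castAdd] at h2
    exact Fin.ext h2
  have hinj2 : Function.Injective (fun i : Fin m =>
      (⟨(η (Fin.natAdd n i) : ℕ) - n,
        by have h1 := (η (Fin.natAdd n i)).isLt; have h2 := hhigh i; omega⟩ : Fin m)) := by
    intro a b hab
    simp only [Fin.mk.injEq] at hab
    have hv : ((η (Fin.natAdd n a)) : ℕ) = ((η (Fin.natAdd n b)) : ℕ) := by
      have ha := hhigh a; have hb := hhigh b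
      omega
    have h1 := η.injective (Fin.ext hv)
    have h2 := congrArg Fin.val h1
    simp only [Fin.coe_natAdd] at h2
    exact Fin.ext (by omega)
  refine ⟨(Equiv.ofBijective _ ((Finite.injective_iff_bijective).1 hinj1),
          Equiv.ofBijective _ ((Finite.injective_iff_bijective).1 hinj2)), ?_⟩
  refine Equiv.ext fun j => ?_
  rcases lt_or_ge (j : ℕ) n with hj | hj
  · have hj' : j = Fin.castAdd m ⟨(j : ℕ), hj⟩ := Fin.ext rfl
    rw [hj', permJoin_castAdd]
    rfl
  · have hjlt : (j : ℕ) - n < m := by have := j.isLt; omega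
    have hj' : j = Fin.natAdd n ⟨(j : ℕ) - n, hjlt⟩ := by
      apply Fin.ext; simp only [Fin.coe_natAdd]; omega
    rw [hj', permJoin_natAdd]
    apply Fin.ext
    show n + ((η (Fin.natAdd n ⟨(j : ℕ) - n, hjlt⟩) : ℕ) - n)
        = (η (Fin.natAdd n ⟨(j : ℕ) - n, hjlt⟩) : ℕ)
    have := hhigh ⟨(j : ℕ) - n, hjlt⟩
    omega

lemma low_of_high (η : Equiv.Perm (Fin (n + m)))
    (hhigh : ∀ i : Fin m, n ≤ ((η (Fin.natAdd n i)) : ℕ)) :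
    ∀ i : Fin n, ((η (Fin.castAdd m i)) : ℕ) < n := by
  have hinj2 : Function.Injective (fun i : Fin m =>
      (⟨(η (Fin.natAdd n i) : ℕ) - n,
        by have h1 := (η (Fin.natAdd n i)).isLt; have h2 := hhigh i; omega⟩ : Fin m)) := by
    intro a b hab
    simp only [Fin.mk.injEq] at hab
    have hv : ((η (Fin.natAdd n a)) : ℕ) = ((η (Fin.natAdd n b)) : ℕ) := by
      have ha := hhigh a; have hb := hhigh b
      omega
    have h1 := η.injective (Fin.ext hv)
    have h2 := congrArg Fin.val h1
    simp only [Fin.coe_natAdd] at h2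
    exact Fin.ext (by omega)
  have hsurj := (Finite.injective_iff_surjective).1 hinj2
  intro i
  by_contra h
  push_neg at h
  obtain ⟨s, hs⟩ := hsurj ⟨(η (Fin.castAdd m i) : ℕ) - n,
    by have := (η (Fin.castAdd m i)).isLt; omega⟩
  have hval := congrArg Fin.val hs
  simp only at hval
  have h2 := hhigh s
  have h3 : η (Fin.natAdd n s) = η (Fin.castAdd m i) := by
    apply Fin.ext
    have := (η (Fin.castAdd m i)).isLt
    omega
  have h4 := η.injective h3
  have h5 := congrArg Fin.val h4
  simp only [Fin.coe_natAdd, Fin.coe_castAdd] at h5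
  have := i.isLt
  omega

lemma mem_join_left {B : Finset (Fin n)} (hB : B ∈ π) :
    B.image (Fin.castAdd m) ∈ joinBlocks π σ :=
  Finset.mem_union_left _ (Finset.mem_image_of_mem _ hB)

lemma mem_join_right {C : Finset (Fin m)} (hC : C ∈ σ) :
    C.image (Fin.natAdd n) ∈ joinBlocks π σ :=
  Finset.mem_union_right _ (Finset.mem_image_of_mem _ hC)

lemma fixes_join_of (p : Equiv.Perm (Fin n) × Equiv.Perm (Fin m))
    (h1 : fixesBlocks π p.1) (h2 : fixesBlocks σ p.2) :
    fixesBlocks (joinBlocks π σ) (permJoin p) := by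
  intro B' hB' j hj
  rcases Finset.mem_union.1 hB' with h | h
  · obtain ⟨B, hB, rfl⟩ := Finset.mem_image.1 h
    obtain ⟨a, ha, rfl⟩ := Finset.mem_image.1 hj
    rw [permJoin_castAdd]
    exact Finset.mem_image_of_mem _ (h1 B hB a ha)
  · obtain ⟨C, hC, rfl⟩ := Finset.mem_image.1 h
    obtain ⟨a, ha, rfl⟩ := Finset.mem_image.1 hj
    rw [permJoin_natAdd]
    exact Finset.mem_image_of_mem _ (h2 C hC a ha)

lemma fixes_of_join (p : Equiv.Perm (Fin n) × Equiv.Perm (Fin m))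
    (h : fixesBlocks (joinBlocks π σ) (permJoin p)) :
    fixesBlocks π p.1 ∧ fixesBlocks σ p.2 := by
  constructor
  · intro B hB j hj
    have h1 := h _ (mem_join_left (σ := σ) hB) _ (Finset.mem_image_of_mem _ hj)
    rw [permJoin_castAdd] at h1
    obtain ⟨a, ha, heq⟩ := Finset.mem_image.1 h1
    have : a = p.1 j := by simpa [Fin.ext_iff] using heq
    rwa [← this]
  · intro C hC j hj
    have h1 := h _ (mem_join_right (π := π) hC) _ (Finset.mem_image_of_mem _ hj)
    rw [permJoin_natAdd] at h1
    obtain ⟨a, ha, heq⟩ := Finset.mem_image.1 h1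
    have : a = p.2 j := by simpa [Fin.ext_iff] using heq
    rwa [← this]

lemma filter_fix_join (hπ : covers π) (hσ : covers σ) :
    Finset.univ.filter (fixesBlocks (joinBlocks π σ))
      = ((Finset.univ.filter (fixesBlocks π)) ×ˢ
          (Finset.univ.filter (fixesBlocks σ))).image permJoin := by
  ext η
  simp only [Finset.mem_filter, Finset.mem_image, Finset.mem_product, Finset.mem_univ,
    true_and]
  constructor
  · intro h
    have hlow : ∀ i : Fin n, ((η (Fin.castAdd m i)) : ℕ) < n := by
      intro i
      obtain ⟨B, hB, hi⟩ := hπ i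
      have h1 := h _ (mem_join_left (σ := σ) hB) _ (Finset.mem_image_of_mem _ hi)
      obtain ⟨a, _, ha⟩ := Finset.mem_image.1 h1
      rw [← ha]
      simpa using a.isLt
    have hhigh : ∀ i : Fin m, n ≤ ((η (Fin.natAdd n i)) : ℕ) := by
      intro i
      obtain ⟨C, hC, hi⟩ := hσ i
      have h1 := h _ (mem_join_right (π := π) hC) _ (Finset.mem_image_of_mem _ hi)
      obtain ⟨a, _, ha⟩ := Finset.mem_image.1 h1
      rw [← ha]
      simp
    obtain ⟨p, hp⟩ := exists_permJoin η hlow hhigh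
    have := fixes_of_join p (hp ▸ h)
    exact ⟨p, this, hp⟩
  · rintro ⟨p, ⟨h1, h2⟩, rfl⟩
    exact fixes_join_of p h1 h2

lemma sameBlock_join_low {j k : Fin n} :
    sameBlock (joinBlocks π σ) (Fin.castAdd m j) (Fin.castAdd m k) ↔ sameBlock π j k := by
  constructor
  · rintro ⟨B', hB', hj, hk⟩
    rcases Finset.mem_union.1 hB' with h | h
    · obtain ⟨B, hB, rfl⟩ := Finset.mem_image.1 h
      obtain ⟨a, ha, hae⟩ := Finset.mem_image.1 hj
      obtain ⟨b, hb, hbe⟩ := Finset.mem_image.1 hk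
      have ha' : a = j := by simpa [Fin.ext_iff] using hae
      have hb' : b = k := by simpa [Fin.ext_iff] using hbe
      exact ⟨B, hB, ha' ▸ ha, hb' ▸ hb⟩
    · obtain ⟨C, hC, rfl⟩ := Finset.mem_image.1 h
      obtain ⟨a, ha, hae⟩ := Finset.mem_image.1 hj
      exfalso
      have := congrArg Fin.val hae
      simp only [Fin.coe_natAdd, Fin.coe_castAdd] at this
      have := j.isLt
      omega
  · rintro ⟨B, hB, hj, hk⟩
    exact ⟨B.image (Fin.castAdd m), mem_join_left hB,
      Finset.mem_image_of_mem _ hj, Finset.mem_image_of_mem _ hk⟩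

lemma sameBlock_join_high {j k : Fin m} :
    sameBlock (joinBlocks π σ) (Fin.natAdd n j) (Fin.natAdd n k) ↔ sameBlock σ j k := by
  constructor
  · rintro ⟨B', hB', hj, hk⟩
    rcases Finset.mem_union.1 hB' with h | h
    · obtain ⟨B, hB, rfl⟩ := Finset.mem_image.1 h
      obtain ⟨a, ha, hae⟩ := Finset.mem_image.1 hj
      exfalso
      have := congrArg Fin.val hae
      simp only [Fin.coe_natAdd, Fin.coe_castAdd] at this
      have := a.isLt
      omega
    · obtain ⟨C, hC, rfl⟩ := Finset.mem_image.1 h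
      obtain ⟨a, ha, hae⟩ := Finset.mem_image.1 hj
      obtain ⟨b, hb, hbe⟩ := Finset.mem_image.1 hk
      have ha' : a = j := by simpa [Fin.ext_iff] using hae
      have hb' : b = k := by simpa [Fin.ext_iff] using hbe
      exact ⟨C, hC, ha' ▸ ha, hb' ▸ hb⟩
  · rintro ⟨C, hC, hj, hk⟩
    exact ⟨C.image (Fin.natAdd n), mem_join_right hC,
      Finset.mem_image_of_mem _ hj, Finset.mem_image_of_mem _ hk⟩

lemma mono_join_iff (f₁ : Fin n → Fin N) (f₂ : Fin m → Fin N) :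
    (∀ j k : Fin (n + m), j < k → sameBlock (joinBlocks π σ) j k →
        Fin.append f₁ f₂ j ≤ Fin.append f₁ f₂ k)
      ↔ (∀ j k : Fin n, j < k → sameBlock π j k → f₁ j ≤ f₁ k) ∧
        (∀ j k : Fin m, j < k → sameBlock σ j k → f₂ j ≤ f₂ k) := by
  constructor
  · intro h
    constructor
    · intro j k hjk hsb
      have := h (Fin.castAdd m j) (Fin.castAdd m k)
        (by rw [Fin.lt_def]; exact hjk) (sameBlock_join_low.2 hsb)
      rwa [Fin.append_left, Fin.append_left] at this
    · intro j k hjk hsb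
      have := h (Fin.natAdd n j) (Fin.natAdd n k)
        (by rw [Fin.lt_def]; simp only [Fin.coe_natAdd]
            exact Nat.add_lt_add_left (Fin.lt_def.1 hjk) n) (sameBlock_join_high.2 hsb)
      rwa [Fin.append_right, Fin.append_right] at this
  · rintro ⟨h1, h2⟩ j k hjk ⟨B', hB', hj, hk⟩
    rcases Finset.mem_union.1 hB' with h | h
    · obtain ⟨B, hB, rfl⟩ := Finset.mem_image.1 h
      obtain ⟨a, ha, rfl⟩ := Finset.mem_image.1 hj
      obtain ⟨b, hb, rfl⟩ := Finset.mem_image.1 hk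
      have hab : a < b := by rw [Fin.lt_def] at hjk ⊢; exact hjk
      rw [Fin.append_left, Fin.append_left]
      exact h1 a b hab ⟨B, hB, ha, hb⟩
    · obtain ⟨C, hC, rfl⟩ := Finset.mem_image.1 h
      obtain ⟨a, ha, rfl⟩ := Finset.mem_image.1 hj
      obtain ⟨b, hb, rfl⟩ := Finset.mem_image.1 hk
      have hab : a < b := by
        rw [Fin.lt_def] at hjk ⊢
        simp only [Fin.coe_natAdd] at hjk
        omega
      rw [Fin.append_right, Fin.append_right]
      exact h2 a b hab ⟨C, hC, ha, hb⟩

lemma append_restrict {α : Type*} (f : Fin (n + m) → α) :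
    Fin.append (fun i => f (Fin.castAdd m i)) (fun i => f (Fin.natAdd n i)) = f := by
  funext j
  refine Fin.addCases ?_ ?_ j
  · intro i; rw [Fin.append_left]
  · intro i; rw [Fin.append_right]

lemma append_injective : Function.Injective
    (fun p : (Fin n → Fin N) × (Fin m → Fin N) => Fin.append p.1 p.2) := by
  intro p q h
  have h' : ∀ x, Fin.append p.1 p.2 x = Fin.append q.1 q.2 x :=
    fun x => congrFun h x
  refine Prod.ext (funext fun i => ?_) (funext fun i => ?_)
  · have := h' (Fin.castAdd m i); rwa [Fin.append_left, Fin.append_left] at this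
  · have := h' (Fin.natAdd n i); rwa [Fin.append_right, Fin.append_right] at this

lemma filter_mono_join :
    (Finset.univ.filter (fun f : Fin (n + m) → Fin N =>
        ∀ j k : Fin (n + m), j < k → sameBlock (joinBlocks π σ) j k → f j ≤ f k))
      = ((Finset.univ.filter (fun f : Fin n → Fin N =>
            ∀ j k : Fin n, j < k → sameBlock π j k → f j ≤ f k)) ×ˢ
          (Finset.univ.filter (fun f : Fin m → Fin N =>
            ∀ j k : Fin m, j < k → sameBlock σ j k → f j ≤ f k))).image
          (fun p => Fin.append p.1 p.2) := by
  ext f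
  simp only [Finset.mem_filter, Finset.mem_image, Finset.mem_product, Finset.mem_univ,
    true_and]
  constructor
  · intro h
    refine ⟨(fun i => f (Fin.castAdd m i), fun i => f (Fin.natAdd n i)), ?_, append_restrict f⟩
    exact (mono_join_iff _ _).1 (by rw [append_restrict]; exact h)
  · rintro ⟨p, hp, rfl⟩
    exact (mono_join_iff _ _).2 hp

lemma ncMonomial_mul (f₁ : Fin n → Fin N) (f₂ : Fin m → Fin N)
    (η₁ : Equiv.Perm (Fin n)) (η₂ : Equiv.Perm (Fin m)) :
    (ncMonomial fun j => (Fin.append f₁ f₂) ((permJoin (η₁, η₂)) j))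
      = (ncMonomial fun j => f₁ (η₁ j)) * (ncMonomial fun j => f₂ (η₂ j)) := by
  rw [ncMonomial, List.ofFn_add, List.prod_append, ncMonomial, ncMonomial]
  have h1 : (fun i : Fin n => FreeAlgebra.ι ℚ
        (Fin.append f₁ f₂ ((permJoin (η₁, η₂)) (Fin.castAdd m i))))
      = fun j => FreeAlgebra.ι ℚ (f₁ (η₁ j)) := funext fun i => by
    rw [permJoin_castAdd (η₁, η₂) i, Fin.append_left]
  have h2 : (fun i : Fin m => FreeAlgebra.ι ℚ
        (Fin.append f₁ f₂ ((permJoin (η₁, η₂)) (Fin.natAdd n i))))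
      = fun j => FreeAlgebra.ι ℚ (f₂ (η₂ j)) := funext fun i => by
    rw [permJoin_natAdd (η₁, η₂) i, Fin.append_right]
  exact congrArg₂ (· * ·) (congrArg (fun g => (List.ofFn g).prod) h1)
    (congrArg (fun g => (List.ofFn g).prod) h2)

lemma join_hNC (hπ : covers π) (hσ : covers σ) :
    hNC N (joinBlocks π σ) = hNC N π * hNC N σ := by
  rw [hNC, hNC, hNC, Finset.sum_mul_sum]
  rw [filter_fix_join hπ hσ]
  rw [Finset.sum_image (fun x _ y _ h => permJoin_injective h)]
  rw [Finset.sum_product]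
  refine Finset.sum_congr rfl fun η₁ _ => ?_
  refine Finset.sum_congr rfl fun η₂ _ => ?_
  rw [filter_mono_join (N := N) (π := π) (σ := σ)]
  rw [Finset.sum_image (fun x _ y _ h => append_injective h)]
  rw [Finset.sum_product, Finset.sum_mul_sum]
  refine Finset.sum_congr rfl fun f₁ _ => ?_
  refine Finset.sum_congr rfl fun f₂ _ => ?_
  exact ncMonomial_mul f₁ f₂ η₁ η₂


lemma hPS0 {l : ℕ} (b : Fin (l + 1) → ℕ) :
    (∑ j ∈ Finset.univ.filter fun j : Fin (l + 1) => j < 0, b j) = 0 := by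
  rw [Finset.filter_false_of_mem, Finset.sum_empty]
  intro j _
  exact Fin.not_lt_zero j

lemma hPSsucc {l : ℕ} (b : Fin (l + 1) → ℕ) (i : Fin l) :
    (∑ j ∈ Finset.univ.filter fun j : Fin (l + 1) => j < i.succ, b j)
      = b 0 + ∑ j ∈ Finset.univ.filter fun j : Fin l => j < i, b j.succ := by
  rw [Finset.sum_filter, Finset.sum_filter, Fin.sum_univ_succ]
  congr 1
  · refine Finset.sum_congr rfl fun j _ => ?_
    congr 1
    simp [Fin.succ_lt_succ_iff]

lemma filter_interval_castAdd (n₁ n₂ c : ℕ) (hc : c ≤ n₁) :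
    ((Finset.univ : Finset (Fin (n₁ + n₂))).filter fun k : Fin (n₁ + n₂) =>
        0 ≤ (k : ℕ) ∧ (k : ℕ) < 0 + c)
      = (((Finset.univ : Finset (Fin n₁)).filter fun k : Fin n₁ =>
          0 ≤ (k : ℕ) ∧ (k : ℕ) < 0 + c)).image (Fin.castAdd n₂) := by
  ext k
  simp only [Finset.mem_filter, Finset.mem_image, Finset.mem_univ, true_and]
  constructor
  · rintro ⟨-, hk⟩
    refine ⟨⟨(k : ℕ), by omega⟩, ⟨Nat.zero_le _, ?_⟩, Fin.ext rfl⟩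
    show (k : ℕ) < 0 + c
    omega
  · rintro ⟨a, ⟨-, ha⟩, rfl⟩
    refine ⟨Nat.zero_le _, ?_⟩
    show (a : ℕ) < 0 + c
    exact ha

lemma filter_interval_natAdd (n₁ n₂ s c : ℕ) :
    ((Finset.univ : Finset (Fin (n₁ + n₂))).filter fun k : Fin (n₁ + n₂) =>
        n₁ + s ≤ (k : ℕ) ∧ (k : ℕ) < n₁ + s + c)
      = (((Finset.univ : Finset (Fin n₂)).filter fun k : Fin n₂ =>
          s ≤ (k : ℕ) ∧ (k : ℕ) < s + c)).image (Fin.natAdd n₁) := by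
  ext k
  simp only [Finset.mem_filter, Finset.mem_image, Finset.mem_univ, true_and]
  constructor
  · rintro ⟨h1, h2⟩
    have hk := k.isLt
    refine ⟨⟨(k : ℕ) - n₁, by omega⟩, ⟨by simp; omega, by simp; omega⟩, ?_⟩
    apply Fin.ext
    simp only [Fin.coe_natAdd]
    omega
  · rintro ⟨a, ⟨h1, h2⟩, rfl⟩
    simp only [Fin.coe_natAdd]
    omega

lemma intervalBlocks_decomp (n₂ : ℕ) {l : ℕ} (b : Fin (l + 1) → ℕ) :
    intervalBlocks (b 0 + n₂) b
      = joinBlocks (intervalBlocks (b 0) fun _ : Fin 1 => b 0)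
          (intervalBlocks n₂ (b ∘ Fin.succ)) := by
  have key0 : ((Finset.univ : Finset (Fin (b 0 + n₂))).filter fun k : Fin (b 0 + n₂) =>
      (∑ j ∈ Finset.univ.filter fun j : Fin (l + 1) => j < 0, b j) ≤ (k : ℕ) ∧
        (k : ℕ) < (∑ j ∈ Finset.univ.filter fun j : Fin (l + 1) => j < 0, b j) + b 0)
      = (((Finset.univ : Finset (Fin (b 0))).filter fun k : Fin (b 0) =>
          (∑ j ∈ Finset.univ.filter fun j : Fin 1 => j < (0 : Fin 1),
            (fun _ : Fin 1 => b 0) j) ≤ (k : ℕ) ∧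
          (k : ℕ) < (∑ j ∈ Finset.univ.filter fun j : Fin 1 => j < (0 : Fin 1),
            (fun _ : Fin 1 => b 0) j) + b 0)).image (Fin.castAdd n₂) := by
    simp only [hPS0]
    exact filter_interval_castAdd (b 0) n₂ (b 0) le_rfl
  have keyS : ∀ j : Fin l, ((Finset.univ : Finset (Fin (b 0 + n₂))).filter
      fun k : Fin (b 0 + n₂) =>
      (∑ j' ∈ Finset.univ.filter fun j' : Fin (l + 1) => j' < j.succ, b j') ≤ (k : ℕ) ∧
        (k : ℕ) < (∑ j' ∈ Finset.univ.filter fun j' : Fin (l + 1) => j' < j.succ, b j') +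
          b j.succ)
      = (((Finset.univ : Finset (Fin n₂)).filter fun k : Fin n₂ =>
          (∑ j' ∈ Finset.univ.filter fun j' : Fin l => j' < j, (b ∘ Fin.succ) j') ≤ (k : ℕ) ∧
          (k : ℕ) < (∑ j' ∈ Finset.univ.filter fun j' : Fin l => j' < j, (b ∘ Fin.succ) j') +
            (b ∘ Fin.succ) j)).image (Fin.natAdd (b 0)) := by
    intro j
    simp only [hPSsucc, Function.comp_apply]
    exact filter_interval_natAdd (b 0) n₂ _ (b j.succ)
  unfold intervalBlocks joinBlocks
  ext B
  simp only [Finset.mem_union, Finset.mem_filter, Finset.mem_image, Finset.mem_univ,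
    true_and]
  constructor
  · rintro ⟨⟨i, rfl⟩, hne⟩
    rcases Fin.eq_zero_or_eq_succ i with rfl | ⟨j, rfl⟩
    · refine Or.inl ⟨_, ⟨⟨(0 : Fin 1), rfl⟩, ?_⟩, key0.symm⟩
      rw [key0] at hne
      exact (Finset.image_nonempty).1 hne
    · refine Or.inr ⟨_, ⟨⟨j, rfl⟩, ?_⟩, (keyS j).symm⟩
      rw [keyS j] at hne
      exact (Finset.image_nonempty).1 hne
  · rintro (⟨B₁, ⟨⟨i1, rfl⟩, hne₁⟩, rfl⟩ | ⟨B₂, ⟨⟨j, rfl⟩, hne₂⟩, rfl⟩)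
    · have hi1 : i1 = 0 := by ext; omega
      subst hi1
      exact ⟨⟨0, key0⟩, Finset.image_nonempty.2 hne₁⟩
    · exact ⟨⟨j.succ, keyS j⟩, Finset.image_nonempty.2 hne₂⟩

lemma intervalBlocks_covers : ∀ {l n : ℕ} (b : Fin l → ℕ), (∑ i, b i) = n →
    covers (intervalBlocks n b) := by
  intro l
  induction l with
  | zero =>
    intro n b hs k
    have : n = 0 := by simpa using hs.symm
    subst this
    exact k.elim0
  | succ l ih =>
    intro n b hs k
    have hn : n = b 0 + ∑ i : Fin l, (b ∘ Fin.succ) i := by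
      rw [← hs, Fin.sum_univ_succ]; rfl
    subst hn
    rw [intervalBlocks_decomp]
    rcases lt_or_ge (k : ℕ) (b 0) with hk | hk
    · have hmem : (⟨(k : ℕ), hk⟩ : Fin (b 0)) ∈
          ((Finset.univ : Finset (Fin (b 0))).filter fun k' : Fin (b 0) =>
            (∑ j ∈ Finset.univ.filter fun j : Fin 1 => j < (0 : Fin 1),
              (fun _ : Fin 1 => b 0) j) ≤ (k' : ℕ) ∧
            (k' : ℕ) < (∑ j ∈ Finset.univ.filter fun j : Fin 1 => j < (0 : Fin 1),
              (fun _ : Fin 1 => b 0) j) + b 0) := by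
        simp only [Finset.mem_filter, Finset.mem_univ, true_and, hPS0]
        exact ⟨Nat.zero_le _, by show (k : ℕ) < 0 + b 0; omega⟩
      refine ⟨_, mem_join_left (σ := intervalBlocks _ (b ∘ Fin.succ)) ?_,
        Finset.mem_image.2 ⟨⟨(k : ℕ), hk⟩, hmem, Fin.ext rfl⟩⟩
      exact Finset.mem_filter.2 ⟨Finset.mem_image.2 ⟨0, Finset.mem_univ _, rfl⟩, ⟨_, hmem⟩⟩
    · have hk' : (k : ℕ) - b 0 < ∑ i : Fin l, (b ∘ Fin.succ) i := by
        have := k.isLt; omega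
      obtain ⟨B, hB, hkB⟩ := ih (b ∘ Fin.succ) rfl ⟨(k : ℕ) - b 0, hk'⟩
      refine ⟨B.image (Fin.natAdd (b 0)), mem_join_right hB,
        Finset.mem_image.2 ⟨_, hkB, ?_⟩⟩
      apply Fin.ext
      simp only [Fin.coe_natAdd]
      omega

lemma hNC_intervalBlocks (N : ℕ) : ∀ {l n : ℕ} (b : Fin l → ℕ), (∑ i, b i) = n →
    hNC N (intervalBlocks n b) = (List.ofFn fun i => HH N (b i)).prod := by
  intro l
  induction l with
  | zero =>
    intro n b hs
    have : n = 0 := by simpa using hs.symm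
    subst this
    rw [hNC_fin_zero, List.ofFn_zero, List.prod_nil]
  | succ l ih =>
    intro n b hs
    have hn : n = b 0 + ∑ i : Fin l, (b ∘ Fin.succ) i := by
      rw [← hs, Fin.sum_univ_succ]; rfl
    subst hn
    have hc1 : covers (intervalBlocks (b 0) fun _ : Fin 1 => b 0) :=
      intervalBlocks_covers (fun _ : Fin 1 => b 0) (by simp)
    have hc2 : covers (intervalBlocks (∑ i : Fin l, (b ∘ Fin.succ) i) (b ∘ Fin.succ)) :=
      intervalBlocks_covers (b ∘ Fin.succ) rfl
    rw [intervalBlocks_decomp, join_hNC hc1 hc2,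
      ih (b ∘ Fin.succ) rfl, List.ofFn_succ, List.prod_cons]
    rfl

lemma sum_getD_int (mu : List ℕ) :
    ∑ i ∈ Finset.range mu.length, (mu.getD i 0 : ℤ) = (mu.sum : ℤ) := by
  induction mu with
  | nil => simp
  | cons a t ih =>
    rw [List.length_cons, Finset.sum_range_succ']
    simp only [List.getD_cons_succ, List.getD_cons_zero, ih, List.sum_cons]
    push_cast
    ring

lemma sum_getD_int_le (mu : List ℕ) (L : ℕ) (h : mu.length ≤ L) :
    ∑ i ∈ Finset.range L, (mu.getD i 0 : ℤ) = (mu.sum : ℤ) := by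
  rw [← sum_getD_int mu]
  symm
  apply Finset.sum_subset (Finset.range_subset_range.2 h)
  intro i _ hi
  rw [List.getD_eq_default]
  · rfl
  · simp only [Finset.mem_range, not_lt] at hi
    exact hi

lemma sum_get_int (lam : List ℕ) :
    ∑ i : Fin lam.length, (lam.get i : ℤ) = (lam.sum : ℤ) := by
  have h : lam.sum = ∑ i : Fin lam.length, lam.get i := by
    conv_lhs => rw [← List.ofFn_get lam]
    rw [List.sum_ofFn]
  rw [h]
  push_cast
  rfl

lemma sum_betaInt {lam mu : List ℕ} (h : mu.length ≤ lam.length)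
    (ε : Equiv.Perm (Fin lam.length)) :
    ∑ i, betaInt lam mu ε i = (lam.sum : ℤ) - (mu.sum : ℤ) := by
  have hsplit : ∑ i, betaInt lam mu ε i
      = ((∑ i, (lam.get i : ℤ)) - ∑ i : Fin lam.length, (mu.getD ((ε i : ℕ)) 0 : ℤ))
        + ((∑ i : Fin lam.length, ((ε i : ℕ) : ℤ)) - ∑ i : Fin lam.length, ((i : ℕ) : ℤ)) := by
    rw [← Finset.sum_sub_distrib, ← Finset.sum_sub_distrib, ← Finset.sum_add_distrib]
    refine Finset.sum_congr rfl fun i _ => ?_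
    unfold betaInt
    ring
  rw [hsplit]
  have h2 : ∑ i : Fin lam.length, (mu.getD ((ε i : ℕ)) 0 : ℤ) = (mu.sum : ℤ) := by
    rw [Equiv.sum_comp ε (fun i : Fin lam.length => (mu.getD ((i : ℕ)) 0 : ℤ)),
      Fin.sum_univ_eq_sum_range (fun t => (mu.getD t 0 : ℤ)), sum_getD_int_le mu _ h]
  have h3 : ∑ i : Fin lam.length, ((ε i : ℕ) : ℤ) = ∑ i : Fin lam.length, ((i : ℕ) : ℤ) :=
    Equiv.sum_comp ε (fun i : Fin lam.length => ((i : ℕ) : ℤ))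
  rw [h2, h3, sum_get_int]
  ring

lemma sNC_eq_Dt (N n : ℕ) (lam mu : List ℕ) (hlen : mu.length ≤ lam.length)
    (hsum : (lam.sum : ℤ) - (mu.sum : ℤ) = n) :
    sNC N n id lam mu = Dt N lam.length (fun i j =>
      (lam.get i : ℤ) - (mu.getD ((j : ℕ)) 0 : ℤ) + ((j : ℕ) : ℤ) - ((i : ℕ) : ℤ)) := by
  rw [sNC, Dt]
  refine Finset.sum_congr rfl fun ε _ => ?_
  by_cases hb : ∀ i, 0 ≤ betaInt lam mu ε i
  · rw [if_pos hb, applyMap_id]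
    have htot : ∑ i, (betaInt lam mu ε i).toNat = n := by
      have h1 : ((∑ i, (betaInt lam mu ε i).toNat : ℕ) : ℤ) = (n : ℤ) := by
        push_cast
        rw [Finset.sum_congr rfl (fun i _ => Int.toNat_of_nonneg (hb i)),
          sum_betaInt hlen ε, hsum]
      exact_mod_cast h1
    rw [hNC_intervalBlocks N _ htot]
    have hfn : (fun i : Fin lam.length => Hfun N
          ((lam.get i : ℤ) - (mu.getD ((ε i : ℕ)) 0 : ℤ) + ((ε i : ℕ) : ℤ) - ((i : ℕ) : ℤ)))
        = fun i : Fin lam.length =>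
            (1 / ((betaInt lam mu ε i).toNat.factorial : ℚ)) •
              HH N ((betaInt lam mu ε i).toNat) := by
      funext i
      rw [show ((lam.get i : ℤ) - (mu.getD ((ε i : ℕ)) 0 : ℤ) + ((ε i : ℕ) : ℤ)
          - ((i : ℕ) : ℤ)) = betaInt lam mu ε i from rfl]
      rw [Hfun, if_pos (hb i)]
    rw [hfn, listProd_smul, mul_smul]
  · rw [if_neg hb]
    push_neg at hb
    obtain ⟨i0, hi0⟩ := hb
    symm
    have h0 : Hfun N ((lam.get i0 : ℤ) - (mu.getD ((ε i0 : ℕ)) 0 : ℤ) + ((ε i0 : ℕ) : ℤ)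
        - ((i0 : ℕ) : ℤ)) = 0 := Hfun_neg N hi0
    rw [List.prod_eq_zero ((List.mem_ofFn).2 ⟨i0, h0⟩), smul_zero]

lemma swap_succAbove (ℓ m'' : ℕ) (hl : 0 < ℓ) (y : Fin (ℓ + m'')) :
    Equiv.swap (⟨ℓ, by omega⟩ : Fin (ℓ + m'' + 1)) ⟨ℓ - 1, by omega⟩
        ((⟨ℓ, by omega⟩ : Fin (ℓ + m'' + 1)).succAbove y)
      = (⟨ℓ - 1, by omega⟩ : Fin (ℓ + m'' + 1)).succAbove y := by
  rcases lt_trichotomy ((y : ℕ)) (ℓ - 1) with hy | hy | hy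
  · have h1 : (⟨ℓ, by omega⟩ : Fin (ℓ + m'' + 1)).succAbove y = y.castSucc :=
      Fin.succAbove_of_castSucc_lt _ _ (by rw [Fin.lt_def]; simp; omega)
    have h2 : (⟨ℓ - 1, by omega⟩ : Fin (ℓ + m'' + 1)).succAbove y = y.castSucc :=
      Fin.succAbove_of_castSucc_lt _ _ (by rw [Fin.lt_def]; simp; omega)
    rw [h1, h2, Equiv.swap_apply_of_ne_of_ne]
    · intro h; have := congrArg Fin.val h; simp at this; omega
    · intro h; have := congrArg Fin.val h; simp at this; omega
  · have h1 : (⟨ℓ, by omega⟩ : Fin (ℓ + m'' + 1)).succAbove y = y.castSucc :=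
      Fin.succAbove_of_castSucc_lt _ _ (by rw [Fin.lt_def]; simp; omega)
    have h2 : y.castSucc = (⟨ℓ - 1, by omega⟩ : Fin (ℓ + m'' + 1)) := by
      apply Fin.ext; simp [hy]
    have h3 : (⟨ℓ - 1, by omega⟩ : Fin (ℓ + m'' + 1)).succAbove y = y.succ :=
      Fin.succAbove_of_le_castSucc _ _ (by rw [Fin.le_def]; simp; omega)
    rw [h1, h2, Equiv.swap_apply_right, h3]
    apply Fin.ext; simp; omega
  · have h1 : (⟨ℓ, by omega⟩ : Fin (ℓ + m'' + 1)).succAbove y = y.succ :=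
      Fin.succAbove_of_le_castSucc _ _ (by rw [Fin.le_def]; simp; omega)
    have h2 : (⟨ℓ - 1, by omega⟩ : Fin (ℓ + m'' + 1)).succAbove y = y.succ :=
      Fin.succAbove_of_le_castSucc _ _ (by rw [Fin.le_def]; simp; omega)
    rw [h1, h2, Equiv.swap_apply_of_ne_of_ne]
    · intro h; have := congrArg Fin.val h; simp at this; omega
    · intro h; have := congrArg Fin.val h; simp at this; omega

lemma Dt_mul (N ℓ m'' : ℕ) (hl : 0 < ℓ) (M : Fin (ℓ + (m'' + 1)) → Fin (ℓ + (m'' + 1)) → ℤ)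
    (hneg : ∀ i j : Fin (ℓ + (m'' + 1)), ℓ ≤ (i : ℕ) → (j : ℕ) < ℓ →
      ¬((i : ℕ) = ℓ ∧ (j : ℕ) + 1 = ℓ) → M i j < 0)
    (hzero : ∀ i j : Fin (ℓ + (m'' + 1)), (i : ℕ) = ℓ → (j : ℕ) + 1 = ℓ → M i j = 0) :
    Dt N (ℓ + (m'' + 1)) M
      = Dt N ℓ (fun i j => M (Fin.castAdd (m'' + 1) i) (Fin.castAdd (m'' + 1) j)) *
          Dt N (m'' + 1) (fun i j => M (Fin.natAdd ℓ i) (Fin.natAdd ℓ j)) -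
        Dt N (ℓ + m'') (fun i j =>
          M ((⟨ℓ, by omega⟩ : Fin (ℓ + m'' + 1)).succAbove i)
            ((⟨ℓ - 1, by omega⟩ : Fin (ℓ + m'' + 1)).succAbove j)) := by
  have hrlt : ℓ < ℓ + m'' + 1 := by omega
  have hclt : ℓ - 1 < ℓ + m'' + 1 := by omega
  set r : Fin (ℓ + m'' + 1) := ⟨ℓ, hrlt⟩ with hr
  set c : Fin (ℓ + m'' + 1) := ⟨ℓ - 1, hclt⟩ with hc
  set f : Equiv.Perm (Fin (ℓ + (m'' + 1))) → FreeAlgebra ℚ (Fin N) := fun σ =>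
    ((Equiv.Perm.sign σ : ℤ) : ℚ) • (List.ofFn fun i => Hfun N (M i (σ i))).prod with hf
  set p : Equiv.Perm (Fin (ℓ + (m'' + 1))) → Prop := fun σ =>
    ∀ i : Fin (ℓ + (m'' + 1)), ℓ ≤ (i : ℕ) → ℓ ≤ ((σ i) : ℕ) with hp
  set q : Equiv.Perm (Fin (ℓ + (m'' + 1))) → Prop := fun σ => σ r = c with hq
  -- zero entry
  have hzero1 : Hfun N (M r c) = 1 := by
    rw [hzero r c rfl (by rw [hc]; show ℓ - 1 + 1 = ℓ; omega), Hfun_zero]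
  -- Part A
  have hfilterp : Finset.univ.filter p
      = ((Finset.univ : Finset (Equiv.Perm (Fin ℓ) × Equiv.Perm (Fin (m'' + 1))))).image
          permJoin := by
    ext σ
    simp only [Finset.mem_filter, Finset.mem_image, Finset.mem_univ, true_and, hp]
    constructor
    · intro hpσ
      have hhigh : ∀ i : Fin (m'' + 1), ℓ ≤ ((σ (Fin.natAdd ℓ i)) : ℕ) := fun i =>
        hpσ _ (by simp)
      exact exists_permJoin σ (low_of_high σ hhigh) hhigh
    · rintro ⟨pp, rfl⟩
      intro i hi
      have hieq : i = Fin.natAdd ℓ ⟨(i : ℕ) - ℓ, by have := i.isLt; omega⟩ := by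
        apply Fin.ext
        show (i : ℕ) = ℓ + ((i : ℕ) - ℓ)
        omega
      rw [hieq, permJoin_natAdd]
      simp
  have partA : ∑ σ ∈ Finset.univ.filter p, f σ
      = Dt N ℓ (fun i j => M (Fin.castAdd (m'' + 1) i) (Fin.castAdd (m'' + 1) j)) *
          Dt N (m'' + 1) (fun i j => M (Fin.natAdd ℓ i) (Fin.natAdd ℓ j)) := by
    rw [hfilterp, Finset.sum_image (fun x _ y _ h => permJoin_injective h), Dt, Dt,
      Finset.sum_mul_sum, ← Finset.sum_product', Finset.univ_product_univ]
    refine Finset.sum_congr rfl fun pp _ => ?_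
    have hsign : Equiv.Perm.sign (permJoin pp)
        = Equiv.Perm.sign pp.1 * Equiv.Perm.sign pp.2 := by
      rw [permJoin, Equiv.Perm.sign_permCongr, Equiv.Perm.sign_sumCongr]
    have e1 : (fun i : Fin ℓ => Hfun N
          (M (Fin.castAdd (m'' + 1) i) (permJoin pp (Fin.castAdd (m'' + 1) i))))
        = fun i => Hfun N (M (Fin.castAdd (m'' + 1) i) (Fin.castAdd (m'' + 1) (pp.1 i))) :=
      funext fun i => by rw [permJoin_castAdd]
    have e2 : (fun i : Fin (m'' + 1) => Hfun N
          (M (Fin.natAdd ℓ i) (permJoin pp (Fin.natAdd ℓ i))))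
        = fun i => Hfun N (M (Fin.natAdd ℓ i) (Fin.natAdd ℓ (pp.2 i))) :=
      funext fun i => by rw [permJoin_natAdd]
    have hprod : (List.ofFn fun i => Hfun N (M i (permJoin pp i))).prod
        = (List.ofFn fun i => Hfun N
            (M (Fin.castAdd (m'' + 1) i) (Fin.castAdd (m'' + 1) (pp.1 i)))).prod *
          (List.ofFn fun i => Hfun N
            (M (Fin.natAdd ℓ i) (Fin.natAdd ℓ (pp.2 i)))).prod := by
      rw [List.ofFn_add, List.prod_append, ← e1, ← e2]
      rfl
    rw [hf]
    simp only []
    rw [hsign, hprod,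
      show (((Equiv.Perm.sign pp.1 * Equiv.Perm.sign pp.2 : ℤˣ) : ℤ) : ℚ)
        = ((Equiv.Perm.sign pp.1 : ℤ) : ℚ) * ((Equiv.Perm.sign pp.2 : ℤ) : ℚ) by push_cast; ring,
      smul_mul_smul_comm]
  -- Part B: the pivot bijection
  set φ : Equiv.Perm (Fin (ℓ + m'')) → Equiv.Perm (Fin (ℓ + (m'' + 1))) := fun τ =>
    (finSuccEquiv' r).trans ((Equiv.optionCongr τ).trans (finSuccEquiv' c).symm) with hφ
  have hφr : ∀ τ, φ τ r = c := by
    intro τ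
    show (finSuccEquiv' c).symm ((Equiv.optionCongr τ) ((finSuccEquiv' r) r)) = c
    rw [finSuccEquiv'_at, Equiv.optionCongr_apply, Option.map_none, finSuccEquiv'_symm_none]
  have hφs : ∀ τ i, φ τ (r.succAbove i) = c.succAbove (τ i) := by
    intro τ i
    show (finSuccEquiv' c).symm
        ((Equiv.optionCongr τ) ((finSuccEquiv' r) (r.succAbove i))) = c.succAbove (τ i)
    rw [finSuccEquiv'_succAbove, Equiv.optionCongr_apply, Option.map_some,
      finSuccEquiv'_symm_some]
  have hφinj : Function.Injective φ := by
    intro τ τ' h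
    apply Equiv.ext; intro i
    have h2 : φ τ (r.succAbove i) = φ τ' (r.succAbove i) := by rw [h]
    rw [hφs, hφs] at h2
    exact Fin.succAbove_right_injective h2
  have hfilterq : Finset.univ.filter q = Finset.univ.image φ := by
    ext σ
    simp only [Finset.mem_filter, Finset.mem_image, Finset.mem_univ, true_and, hq]
    constructor
    · intro hqσ
      set σ' : Equiv.Perm (Option (Fin (ℓ + m''))) :=
        ((finSuccEquiv' r).symm.trans (σ.trans (finSuccEquiv' c))) with hσ'
      have hnone : σ' none = none := by
        show (finSuccEquiv' c) (σ ((finSuccEquiv' r).symm none)) = none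
        rw [finSuccEquiv'_symm_none, hqσ, finSuccEquiv'_at]
      refine ⟨Equiv.removeNone σ', ?_⟩
      have hoc : Equiv.optionCongr (Equiv.removeNone σ') = σ' := by
        rw [map_equiv_removeNone, hnone, Equiv.swap_self]
        apply Equiv.ext; intro x; rfl
      rw [hφ]
      simp only []
      apply Equiv.ext; intro x
      rw [hoc]
      show (finSuccEquiv' c).symm
          ((finSuccEquiv' c) (σ ((finSuccEquiv' r).symm ((finSuccEquiv' r) x)))) = σ x
      rw [Equiv.symm_apply_apply, Equiv.symm_apply_apply]
    · rintro ⟨τ, rfl⟩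
      exact hφr τ
  have hsign : ∀ τ, Equiv.Perm.sign (φ τ) = - Equiv.Perm.sign τ := by
    intro τ
    have hdec : φ τ = ((finSuccEquiv' r).trans ((Equiv.optionCongr τ).trans
        (finSuccEquiv' r).symm)).trans (Equiv.swap r c) := by
      apply Equiv.ext; intro x
      by_cases hx : x = r
      · subst hx
        rw [hφr]
        show c = Equiv.swap r c
          ((finSuccEquiv' r).symm ((Equiv.optionCongr τ) ((finSuccEquiv' r) r)))
        rw [finSuccEquiv'_at, Equiv.optionCongr_apply, Option.map_none,
          finSuccEquiv'_symm_none, Equiv.swap_apply_left]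
      · obtain ⟨i, rfl⟩ := Fin.exists_succAbove_eq hx
        rw [hφs]
        show c.succAbove (τ i) = Equiv.swap r c
          ((finSuccEquiv' r).symm ((Equiv.optionCongr τ) ((finSuccEquiv' r) (r.succAbove i))))
        rw [finSuccEquiv'_succAbove, Equiv.optionCongr_apply, Option.map_some,
          finSuccEquiv'_symm_some]
        exact (swap_succAbove ℓ m'' hl (τ i)).symm
    have hrc : r ≠ c := by
      intro h
      have h2 : ℓ = ℓ - 1 := congrArg Fin.val h
      omega
    have h1 : φ τ = Equiv.swap r c *
        Equiv.permCongr (finSuccEquiv' r).symm (Equiv.optionCongr τ) := hdec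
    calc Equiv.Perm.sign (φ τ)
        = Equiv.Perm.sign (Equiv.swap r c *
            Equiv.permCongr (finSuccEquiv' r).symm (Equiv.optionCongr τ)) := by rw [h1]
      _ = Equiv.Perm.sign (Equiv.swap r c) *
            Equiv.Perm.sign (Equiv.permCongr (finSuccEquiv' r).symm (Equiv.optionCongr τ)) :=
          map_mul _ _ _
      _ = - Equiv.Perm.sign τ := by
          rw [Equiv.Perm.sign_swap hrc, Equiv.Perm.sign_permCongr, Equiv.optionCongr_sign,
            neg_one_mul]
  have hprodB : ∀ τ, (List.ofFn fun i => Hfun N (M i (φ τ i))).prod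
      = (List.ofFn fun i => Hfun N (M (r.succAbove i) (c.succAbove (τ i)))).prod := by
    intro τ
    show (List.ofFn fun i : Fin (ℓ + m'' + 1) => Hfun N (M i (φ τ i))).prod
      = (List.ofFn fun i => Hfun N (M (r.succAbove i) (c.succAbove (τ i)))).prod
    rw [listProd_erase (fun i : Fin (ℓ + m'' + 1) => Hfun N (M i (φ τ i))) r
      (by show Hfun N (M r (φ τ r)) = 1; rw [hφr]; exact hzero1)]
    refine congrArg List.prod (congrArg List.ofFn (funext fun i => ?_))
    show Hfun N (M (r.succAbove i) (φ τ (r.succAbove i)))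
      = Hfun N (M (r.succAbove i) (c.succAbove (τ i)))
    rw [hφs]
  have partB : ∑ σ ∈ Finset.univ.filter q, f σ
      = - Dt N (ℓ + m'') (fun i j => M (r.succAbove i) (c.succAbove j)) := by
    rw [hfilterq, Finset.sum_image (fun x _ y _ h => hφinj h), Dt, ← Finset.sum_neg_distrib]
    refine Finset.sum_congr rfl fun τ _ => ?_
    rw [hf]
    simp only []
    rw [hsign τ, hprodB τ]
    have hc1 : (((- Equiv.Perm.sign τ : ℤˣ) : ℤ) : ℚ) = -(((Equiv.Perm.sign τ : ℤˣ) : ℤ) : ℚ) := by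
      push_cast; ring
    rw [hc1, neg_smul]
  -- vanishing part
  have hvanish : ∀ σ ∈ (Finset.univ.filter fun σ => ¬ p σ).filter (fun σ => ¬ q σ),
      f σ = 0 := by
    intro σ hσ
    simp only [Finset.mem_filter] at hσ
    obtain ⟨⟨-, hnp⟩, hnq⟩ := hσ
    replace hnp : ¬ ∀ i : Fin (ℓ + (m'' + 1)), ℓ ≤ (i : ℕ) → ℓ ≤ ((σ i) : ℕ) := hnp
    push_neg at hnp
    obtain ⟨i0, hi0, hlt⟩ := hnp
    have hM : M i0 (σ i0) < 0 := by
      refine hneg i0 (σ i0) hi0 hlt ?_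
      rintro ⟨h1, h2⟩
      apply hnq
      show σ r = c
      have hi0r : i0 = r := Fin.ext h1
      have hσc : σ i0 = c := Fin.ext (show (σ i0 : ℕ) = ℓ - 1 by omega)
      rw [← hi0r, hσc]
    rw [hf]
    simp only []
    rw [List.prod_eq_zero ((List.mem_ofFn).2 ⟨i0, Hfun_neg N hM⟩), smul_zero]
  have hqnp : ∀ σ, q σ → ¬ p σ := by
    intro σ hqσ hpσ
    have hqσ' : σ r = c := hqσ
    have h1 : ℓ ≤ ((σ r) : ℕ) := hpσ r le_rfl
    rw [hqσ'] at h1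
    have h2 : (c : ℕ) = ℓ - 1 := rfl
    omega
  have hdt : Dt N (ℓ + (m'' + 1)) M
      = (∑ σ ∈ Finset.univ.filter p, f σ) + ∑ σ ∈ Finset.univ.filter q, f σ := by
    have h0 : Dt N (ℓ + (m'' + 1)) M = ∑ σ : Equiv.Perm (Fin (ℓ + (m'' + 1))), f σ :=
      Finset.sum_congr rfl fun σ _ => by rw [hf]
    rw [h0, ← Finset.sum_filter_add_sum_filter_not Finset.univ p f]
    congr 1
    rw [← Finset.sum_filter_add_sum_filter_not (Finset.univ.filter fun σ => ¬ p σ) q f,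
      Finset.sum_eq_zero hvanish, add_zero, Finset.filter_filter]
    apply Finset.sum_congr _ fun _ _ => rfl
    apply Finset.filter_congr
    intro σ _
    constructor
    · exact And.right
    · intro hqσ
      exact ⟨hqnp σ hqσ, hqσ⟩
  rw [hdt, partA, partB, sub_eq_add_neg]


lemma sum_map_add_const (l : List ℕ) (c : ℕ) :
    (l.map fun x => x + c).sum = l.sum + l.length * c := by
  induction l with
  | nil => simp
  | cons x t ih =>
    simp only [List.map_cons, List.sum_cons, List.length_cons, ih]
    ring

lemma getD_map_lt (f : ℕ → ℕ) (l : List ℕ) {iv : ℕ} (h : iv < l.length) :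
    (l.map f).getD iv 0 = f (l.getD iv 0) := by
  rw [List.getD_eq_getElem _ _ (by simpa using h), List.getD_eq_getElem _ _ h,
    List.getElem_map]

lemma getD_append_lt {l₁ l₂ : List ℕ} {iv d : ℕ} (h : iv < l₁.length) :
    (l₁ ++ l₂).getD iv d = l₁.getD iv d := by
  rw [List.getD_eq_getElem _ _ (by simp; omega), List.getD_eq_getElem _ _ h,
    List.getElem_append_left h]

lemma getD_append_ge {l₁ l₂ : List ℕ} {iv d : ℕ} (h : l₁.length ≤ iv) :
    (l₁ ++ l₂).getD iv d = l₂.getD (iv - l₁.length) d := by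
  rcases lt_or_ge iv (l₁.length + l₂.length) with h2 | h2
  · rw [List.getD_eq_getElem _ _ (by simp; omega), List.getD_eq_getElem _ _ (by omega),
      List.getElem_append_right h]
  · rw [List.getD_eq_default _ _ (by simp; omega), List.getD_eq_default _ _ (by omega)]

lemma getD_replicate_lt {nn x iv d : ℕ} (h : iv < nn) :
    (List.replicate nn x).getD iv d = x := by
  rw [List.getD_eq_getElem _ _ (by simp [h]), List.getElem_replicate]

def JT (l₁ l₂ : List ℕ) (iv jv : ℕ) : ℤ :=
  (l₁.getD iv 0 : ℤ) - (l₂.getD jv 0 : ℤ) + (jv : ℤ) - (iv : ℤ)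

lemma sNC_eq_Dt' (N n : ℕ) (lam mu : List ℕ) (hlen : mu.length ≤ lam.length)
    (hsum : (lam.sum : ℤ) - (mu.sum : ℤ) = n) :
    sNC N n id lam mu = Dt N lam.length (fun i j => JT lam mu (i : ℕ) (j : ℕ)) := by
  rw [sNC_eq_Dt N n lam mu hlen hsum]
  refine congrArg (Dt N lam.length) (funext fun i => funext fun j => ?_)
  rw [JT, List.get_eq_getElem, List.getD_eq_getElem _ _ i.isLt]

end AuxDev

/-- `s_{[λ]} · s_{[μ]} = s_{[λ·μ]} + s_{[λ⊙μ]}`, where `λ·μ` and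
`λ⊙μ` are the concatenation and near concatenation skew diagrams. -/
theorem source_schur_product_rule (N n m : ℕ) (hN : 0 < N) (lam mu : List ℕ)
    (hlam : IsPartitionList lam) (hmu : IsPartitionList mu)
    (hlsum : lam.sum = n) (hmsum : mu.sum = m) (hn : 1 ≤ n) (hm : 1 ≤ m) :
    sNC N n id lam [] * sNC N m id mu [] =
      sNC N (n + m) id (lam.map (· + mu.getD 0 0 - 1) ++ mu)
          (List.replicate lam.length (mu.getD 0 0 - 1)) +
        sNC N (n + m) id (lam.map (· + mu.getD 0 0) ++ mu.tail)
          (List.replicate (lam.length - 1) (mu.getD 0 0)) := by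
  rcases mu with _ | ⟨a, t⟩
  · simp only [List.sum_nil] at hmsum; omega
  simp only [List.getD_cons_zero, List.tail_cons]
  have hl : 0 < lam.length := by
    rcases lam with _ | ⟨x, s⟩
    · simp only [List.sum_nil] at hlsum; omega
    · simp
  have ha : 0 < a := hmu.2 a (by simp)
  have hmsum' : a + t.sum = m := by simpa using hmsum
  have hgetDle : ∀ s : ℕ, (a :: t).getD s 0 ≤ a := by
    intro s
    rcases lt_or_ge s (a :: t).length with hs | hs
    · rw [List.getD_eq_getElem _ _ hs]
      rcases s with _ | s'
      · simp
      · have ht : ∀ b ∈ t, a ≥ b := (List.pairwise_cons.1 hmu.1).1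
        have he : (a :: t)[s' + 1]'hs = t[s']'(by simpa using hs) := by
          simp
        rw [he]
        exact ht _ (List.getElem_mem _)
    · rw [List.getD_eq_default _ _ hs]; omega
  have hlmlen : (lam.map (· + a - 1)).length = lam.length := by simp
  have hlmlen2 : (lam.map (· + a)).length = lam.length := by simp
  -- the four Dt forms
  have hEq1 : sNC N n id lam []
      = Dt N lam.length (fun i j : Fin lam.length => JT lam [] (i : ℕ) (j : ℕ)) :=
    sNC_eq_Dt' N n lam [] (by simp) (by simp [hlsum])
  have hEq2 : sNC N m id (a :: t) []
      = Dt N (t.length + 1) (fun i j : Fin (t.length + 1) => JT (a :: t) [] (i : ℕ) (j : ℕ)) := by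
    rw [sNC_eq_Dt' N m (a :: t) [] (by simp) (by simp [hmsum])]
    exact Dt_cast N (by simp) _
  have hEq3 : sNC N (n + m) id (lam.map (· + a - 1) ++ a :: t)
        (List.replicate lam.length (a - 1))
      = Dt N (lam.length + (t.length + 1)) (fun i j : Fin (lam.length + (t.length + 1)) =>
          JT (lam.map (· + a - 1) ++ a :: t) (List.replicate lam.length (a - 1))
            (i : ℕ) (j : ℕ)) := by
    rw [sNC_eq_Dt' N (n + m) _ _ (by simp) (by
      have hmap : lam.map (· + a - 1) = lam.map (fun x => x + (a - 1)) := by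
        refine congrArg (fun f => List.map f lam) (funext fun x => ?_)
        omega
      rw [List.sum_append, hmap, sum_map_add_const, List.sum_replicate, smul_eq_mul,
        List.sum_cons]
      omega)]
    exact Dt_cast N (by simp) _
  have hEq4 : sNC N (n + m) id (lam.map (· + a) ++ t)
        (List.replicate (lam.length - 1) a)
      = Dt N (lam.length + t.length) (fun i j : Fin (lam.length + t.length) =>
          JT (lam.map (· + a) ++ t) (List.replicate (lam.length - 1) a)
            (i : ℕ) (j : ℕ)) := by
    rw [sNC_eq_Dt' N (n + m) _ _ (by simp; omega) (by
      rw [List.sum_append, sum_map_add_const, List.sum_replicate, smul_eq_mul]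
      have hx : (lam.length - 1) * a + a = lam.length * a := by
        have h1 : lam.length - 1 + 1 = lam.length := by omega
        calc (lam.length - 1) * a + a = (lam.length - 1 + 1) * a := by ring
          _ = lam.length * a := by rw [h1]
      omega)]
    exact Dt_cast N (by simp) _
  -- hypotheses of Dt_mul
  have hneg : ∀ i j : Fin (lam.length + (t.length + 1)), lam.length ≤ (i : ℕ) →
      (j : ℕ) < lam.length → ¬((i : ℕ) = lam.length ∧ (j : ℕ) + 1 = lam.length) →
      JT (lam.map (· + a - 1) ++ a :: t) (List.replicate lam.length (a - 1))
        (i : ℕ) (j : ℕ) < 0 := by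
    intro i j hi hj hne
    rw [JT, getD_append_ge (by rw [hlmlen]; exact hi), getD_replicate_lt hj, hlmlen]
    by_cases hieq : (i : ℕ) = lam.length
    · have h0 : (i : ℕ) - lam.length = 0 := by omega
      rw [h0, List.getD_cons_zero]
      have hj1 : ¬((j : ℕ) + 1 = lam.length) := fun hcc => hne ⟨hieq, hcc⟩
      omega
    · have hb := hgetDle ((i : ℕ) - lam.length)
      omega
  have hzero : ∀ i j : Fin (lam.length + (t.length + 1)), (i : ℕ) = lam.length →
      (j : ℕ) + 1 = lam.length →
      JT (lam.map (· + a - 1) ++ a :: t) (List.replicate lam.length (a - 1))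
        (i : ℕ) (j : ℕ) = 0 := by
    intro i j hi hj
    rw [JT, getD_append_ge (by rw [hlmlen]; omega), getD_replicate_lt (by omega), hlmlen]
    have h0 : (i : ℕ) - lam.length = 0 := by omega
    rw [h0, List.getD_cons_zero]
    omega
  have key := Dt_mul N lam.length t.length hl
    (fun i j => JT (lam.map (· + a - 1) ++ a :: t) (List.replicate lam.length (a - 1))
      (i : ℕ) (j : ℕ)) hneg hzero
  -- block identifications
  have e1 : (fun i j : Fin lam.length =>
        JT (lam.map (· + a - 1) ++ a :: t) (List.replicate lam.length (a - 1))
          ((Fin.castAdd (t.length + 1) i : Fin (lam.length + (t.length + 1))) : ℕ)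
          ((Fin.castAdd (t.length + 1) j : Fin (lam.length + (t.length + 1))) : ℕ))
      = (fun i j : Fin lam.length => JT lam [] (i : ℕ) (j : ℕ)) := by
    funext i j
    simp only [Fin.coe_castAdd]
    rw [JT, JT, getD_append_lt (by rw [hlmlen]; exact i.isLt), getD_map_lt _ _ i.isLt,
      getD_replicate_lt j.isLt, List.getD_nil]
    omega
  have e2 : (fun i j : Fin (t.length + 1) =>
        JT (lam.map (· + a - 1) ++ a :: t) (List.replicate lam.length (a - 1))
          ((Fin.natAdd lam.length i : Fin (lam.length + (t.length + 1))) : ℕ)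
          ((Fin.natAdd lam.length j : Fin (lam.length + (t.length + 1))) : ℕ))
      = (fun i j : Fin (t.length + 1) => JT (a :: t) [] (i : ℕ) (j : ℕ)) := by
    funext i j
    simp only [Fin.coe_natAdd]
    rw [JT, JT, getD_append_ge (by rw [hlmlen]; omega), hlmlen,
      List.getD_eq_default (List.replicate lam.length (a - 1)) _
        (show (List.replicate lam.length (a - 1)).length ≤ lam.length + (j : ℕ)
          by simp only [List.length_replicate]; omega),
      List.getD_nil]
    have h0 : lam.length + (i : ℕ) - lam.length = (i : ℕ) := by omega
    rw [h0]
    omega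
  have e3 : (fun i j : Fin (lam.length + t.length) =>
        JT (lam.map (· + a - 1) ++ a :: t) (List.replicate lam.length (a - 1))
          (((⟨lam.length, by omega⟩ : Fin (lam.length + t.length + 1)).succAbove i : ℕ))
          (((⟨lam.length - 1, by omega⟩ : Fin (lam.length + t.length + 1)).succAbove j : ℕ)))
      = (fun i j : Fin (lam.length + t.length) =>
          JT (lam.map (· + a) ++ t) (List.replicate (lam.length - 1) a) (i : ℕ) (j : ℕ)) := by
    funext i j
    have hri_lt : (i : ℕ) < lam.length →
        (((⟨lam.length, by omega⟩ : Fin (lam.length + t.length + 1)).succAbove i : ℕ))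
          = (i : ℕ) := by
      intro hi
      rw [Fin.succAbove_of_castSucc_lt _ _ (by rw [Fin.lt_def]; simpa using hi)]
      simp
    have hri_ge : lam.length ≤ (i : ℕ) →
        (((⟨lam.length, by omega⟩ : Fin (lam.length + t.length + 1)).succAbove i : ℕ))
          = (i : ℕ) + 1 := by
      intro hi
      rw [Fin.succAbove_of_le_castSucc _ _ (by rw [Fin.le_def]; simpa using hi)]
      simp
    have hcj_lt : (j : ℕ) < lam.length - 1 →
        (((⟨lam.length - 1, by omega⟩ : Fin (lam.length + t.length + 1)).succAbove j : ℕ))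
          = (j : ℕ) := by
      intro hj
      rw [Fin.succAbove_of_castSucc_lt _ _ (by rw [Fin.lt_def]; simpa using hj)]
      simp
    have hcj_ge : lam.length - 1 ≤ (j : ℕ) →
        (((⟨lam.length - 1, by omega⟩ : Fin (lam.length + t.length + 1)).succAbove j : ℕ))
          = (j : ℕ) + 1 := by
      intro hj
      rw [Fin.succAbove_of_le_castSucc _ _ (by rw [Fin.le_def]; simpa using hj)]
      simp
    rcases lt_or_ge (i : ℕ) lam.length with hi | hi <;>
      rcases lt_or_ge (j : ℕ) (lam.length - 1) with hj | hj
    · rw [hri_lt hi, hcj_lt hj, JT, JT, getD_append_lt (by rw [hlmlen]; exact hi),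
        getD_map_lt _ _ hi, getD_replicate_lt (show (j : ℕ) < lam.length by omega),
        getD_append_lt (by rw [hlmlen2]; exact hi), getD_map_lt _ _ hi,
        getD_replicate_lt hj]
      omega
    · rw [hri_lt hi, hcj_ge hj, JT, JT, getD_append_lt (by rw [hlmlen]; exact hi),
        getD_map_lt _ _ hi,
        List.getD_eq_default _ _ (show (List.replicate lam.length (a - 1)).length ≤ (j : ℕ) + 1
          by simp only [List.length_replicate]; omega),
        getD_append_lt (by rw [hlmlen2]; exact hi), getD_map_lt _ _ hi,
        List.getD_eq_default _ _ (show (List.replicate (lam.length - 1) a).length ≤ (j : ℕ)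
          by simp only [List.length_replicate]; omega)]
      omega
    · rw [hri_ge hi, hcj_lt hj, JT, JT, getD_append_ge (by rw [hlmlen]; omega),
        getD_replicate_lt (show (j : ℕ) < lam.length by omega), hlmlen,
        getD_append_ge (by rw [hlmlen2]; omega), hlmlen2, getD_replicate_lt hj]
      have h1 : (i : ℕ) + 1 - lam.length = ((i : ℕ) - lam.length) + 1 := by omega
      rw [h1, List.getD_cons_succ]
      omega
    · rw [hri_ge hi, hcj_ge hj, JT, JT, getD_append_ge (by rw [hlmlen]; omega),
        List.getD_eq_default _ _ (show (List.replicate lam.length (a - 1)).length ≤ (j : ℕ) + 1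
          by simp only [List.length_replicate]; omega), hlmlen,
        getD_append_ge (by rw [hlmlen2]; omega), hlmlen2,
        List.getD_eq_default _ _ (show (List.replicate (lam.length - 1) a).length ≤ (j : ℕ)
          by simp only [List.length_replicate]; omega)]
      have h1 : (i : ℕ) + 1 - lam.length = ((i : ℕ) - lam.length) + 1 := by omega
      rw [h1, List.getD_cons_succ]
      omega
  rw [e1, e2, e3] at key
  rw [hEq1, hEq2, hEq3, hEq4, key, sub_add_cancel]


end NCSymPaper
end
end
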